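/- arXiv:2204.01595 — 9 statements merged into one kernel-verified Lean document; each statement's English description precedes it below -/
import Mathlib

section
/- Let n ≥ 1 and d ≥ 1, and let P ∈ ℝ[X_1,…,X_n] be a non-zero multi-affine polynomial of total degree at most d. Then the real zero set Z(P, ℝ^n) = {x ∈ ℝ^n : P(x) = 0} has at most 2^{d−1} connected components (with respect to the Euclidean topology on ℝ^n). -/
/-!
Choose a variable `ν` occurring in `P` and write `P = β + X_ν · A` with `A = ∂_ν P`, where `β`
and `A` do not involve `X_ν`. Over `{A ≠ 0}` the zero set of `P` is the graph of `-β / A`, so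
`Z(P) ∩ {A ≠ 0}` has no more components than `{A ≠ 0}`. Every component of `Z(P)` meets
`{A ≠ 0}`: at each point of `Z(P)` some iterated derivative `∂^W P` with `ν ∈ W` is non-zero,
and moving inside `Z(P)` along coordinate lines and along hyperbola branches in coordinate planes
shrinks `W` down to `{ν}`.

Similarly, on each line in direction `i` where `∂_i Q ≠ 0` the set `{Q > 0}` is an open
half-line, so `{Q > 0} ∩ {∂_i Q ≠ 0}` has no more components than `{∂_i Q ≠ 0}`, and it is dense
in the open set `{Q > 0}`. By induction on the degree, `{Q > 0}` has at most `2^(deg Q - 1)`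
components, hence `{A ≠ 0} = {A > 0} ∪ {-A > 0}` has at most `2^(deg A) ≤ 2^(d-1)`.
-/

namespace MvPolynomial

open Function

variable {σ R : Type*}

section CommSemiring

variable [CommSemiring R] {P : MvPolynomial σ R} {i : σ}

def IsMultiAffine (P : MvPolynomial σ R) : Prop := ∀ i, P.degreeOf i ≤ 1

theorem add_single_mem_support_of_mem_support_pderiv {m : σ →₀ ℕ}
    (hm : m ∈ (pderiv i P).support) : m + Finsupp.single i 1 ∈ P.support := by
  rw [mem_support_iff, coeff_pderiv] at hm
  exact mem_support_iff.2 (left_ne_zero_of_mul hm)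

theorem degreeOf_pderiv_le (i j : σ) (P : MvPolynomial σ R) :
    (pderiv i P).degreeOf j ≤ P.degreeOf j :=
  degreeOf_le_iff.2 fun _ hm => (Nat.le_add_right _ _).trans
    (monomial_le_degreeOf j (add_single_mem_support_of_mem_support_pderiv hm))

theorem degreeOf_pderiv_self_le (i : σ) (P : MvPolynomial σ R) :
    (pderiv i P).degreeOf i ≤ P.degreeOf i - 1 := by
  classical
  refine degreeOf_le_iff.2 fun m hm => ?_
  have := monomial_le_degreeOf i (add_single_mem_support_of_mem_support_pderiv hm)
  simp only [Finsupp.add_apply, Finsupp.single_eq_same] at this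
  omega

theorem totalDegree_pderiv_le (i : σ) (P : MvPolynomial σ R) :
    (pderiv i P).totalDegree ≤ P.totalDegree - 1 := by
  classical
  refine Finset.sup_le fun m hm => ?_
  have := le_totalDegree (add_single_mem_support_of_mem_support_pderiv hm)
  rw [Finsupp.sum_add_index' (fun _ => rfl) (fun _ _ _ => rfl), Finsupp.sum_single_index rfl]
    at this
  omega

theorem degreeOf_pderiv_self_eq_zero (h : P.degreeOf i ≤ 1) :
    (pderiv i P).degreeOf i = 0 := by
  have := degreeOf_pderiv_self_le i P
  omega

theorem pderiv_pderiv_self (h : P.degreeOf i ≤ 1) :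
    pderiv i (pderiv i P) = 0 :=
  pderiv_eq_zero_of_notMem_vars fun hi =>
    mem_vars_iff_degreeOf_ne_zero.1 hi (degreeOf_pderiv_self_eq_zero h)

theorem exists_degreeOf_ne_zero_of_totalDegree_ne_zero (h : P.totalDegree ≠ 0) :
    ∃ i, P.degreeOf i ≠ 0 := by
  by_contra! hvars
  have : P.vars = ∅ := Finset.eq_empty_of_forall_notMem fun i hi =>
    mem_vars_iff_degreeOf_ne_zero.1 hi (hvars i)
  rw [vars_eq_empty_iff_eq_C] at this
  exact h (by rw [this, totalDegree_C])

theorem IsMultiAffine.pderiv (hP : P.IsMultiAffine) (i : σ) :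
    (pderiv i P).IsMultiAffine :=
  fun j => (degreeOf_pderiv_le i j P).trans (hP j)

theorem pderiv_comm (i j : σ) (P : MvPolynomial σ R) :
    pderiv i (pderiv j P) = pderiv j (pderiv i P) := by
  classical
  rcases eq_or_ne i j with rfl | hij
  · rfl
  ext m
  simp only [coeff_pderiv, Finsupp.add_apply, Finsupp.single_apply, if_neg hij, if_neg hij.symm,
    add_zero, add_right_comm m]
  ring

theorem pairwise_commute_pderiv :
    Pairwise (Commute on fun i : σ =>
      (pderiv i : Derivation R (MvPolynomial σ R) (MvPolynomial σ R)).toLinearMap) :=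
  fun i j _ => LinearMap.ext (pderiv_comm i j)

noncomputable def iteratedPDeriv (S : Finset σ) : Module.End R (MvPolynomial σ R) :=
  S.noncommProd (fun i => (pderiv i).toLinearMap) (pairwise_commute_pderiv.set_pairwise _)

@[simp]
theorem iteratedPDeriv_empty (P : MvPolynomial σ R) : iteratedPDeriv ∅ P = P := by
  rw [iteratedPDeriv, Finset.noncommProd_empty]
  rfl

theorem iteratedPDeriv_singleton (i : σ) (P : MvPolynomial σ R) :
    iteratedPDeriv {i} P = pderiv i P := by
  rw [iteratedPDeriv, Finset.noncommProd_singleton]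
  rfl

variable [DecidableEq σ] {S : Finset σ}

theorem iteratedPDeriv_insert (h : i ∉ S) (P : MvPolynomial σ R) :
    iteratedPDeriv (insert i S) P = pderiv i (iteratedPDeriv S P) := by
  rw [iteratedPDeriv, Finset.noncommProd_insert_of_notMem _ _ _ _ h]
  rfl

theorem iteratedPDeriv_insert' (h : i ∉ S) (P : MvPolynomial σ R) :
    iteratedPDeriv (insert i S) P = iteratedPDeriv S (pderiv i P) := by
  rw [iteratedPDeriv, Finset.noncommProd_insert_of_notMem' _ _ _ _ h]
  rfl

theorem iteratedPDeriv_eq_pderiv_erase (h : i ∈ S) (P : MvPolynomial σ R) :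
    iteratedPDeriv S P = pderiv i (iteratedPDeriv (S.erase i) P) := by
  rw [← iteratedPDeriv_insert (S.notMem_erase i), Finset.insert_erase h]

theorem IsMultiAffine.iteratedPDeriv (hP : P.IsMultiAffine) (S : Finset σ) :
    (iteratedPDeriv S P).IsMultiAffine := by
  induction S using Finset.induction_on with
  | empty => simpa using hP
  | insert i S hi ih => simpa [iteratedPDeriv_insert hi] using ih.pderiv i

theorem degreeOf_iteratedPDeriv_of_mem (hP : P.IsMultiAffine) (h : i ∈ S) :
    (iteratedPDeriv S P).degreeOf i = 0 := by
  rw [iteratedPDeriv_eq_pderiv_erase h]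
  exact degreeOf_pderiv_self_eq_zero (hP.iteratedPDeriv _ i)

theorem iteratedPDeriv_insert_of_ne_zero (hP : P.IsMultiAffine)
    (h : iteratedPDeriv S (pderiv i P) ≠ 0) :
    iteratedPDeriv (insert i S) P = iteratedPDeriv S (pderiv i P) := by
  refine iteratedPDeriv_insert' (fun hi => h ?_) P
  rw [← Finset.insert_erase hi, iteratedPDeriv_insert' (S.notMem_erase i),
    pderiv_pderiv_self (hP i), map_zero]

theorem eval_update_of_degreeOf_eq_zero (h : P.degreeOf i = 0) (x : σ → R) (t : R) :
    eval (update x i t) P = eval x P :=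
  hom_congr_vars (by ext; simp) (fun j hj _ => by
    rw [eval_X, eval_X, update_of_ne]
    rintro rfl
    exact mem_vars_iff_degreeOf_ne_zero.1 hj h) rfl

end CommSemiring

section CommRing

variable [CommRing R] {P : MvPolynomial σ R} {i : σ}

theorem IsMultiAffine.neg (hP : P.IsMultiAffine) : (-P).IsMultiAffine :=
  fun i => (degreeOf_neg i P).trans_le (hP i)

variable [NoZeroDivisors R] [CharZero R]

theorem pderiv_eq_zero_iff : pderiv i P = 0 ↔ P.degreeOf i = 0 := by
  classical
  refine ⟨fun h => ?_, fun h => pderiv_eq_zero_of_notMem_vars fun hi =>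
    mem_vars_iff_degreeOf_ne_zero.1 hi h⟩
  by_contra hi
  obtain ⟨m, hm, him⟩ := (mem_vars_iff_mem_support i).1 (mem_vars_iff_degreeOf_ne_zero.2 hi)
  have hle : Finsupp.single i 1 ≤ m := Finsupp.single_le_iff.2 (Nat.one_le_iff_ne_zero.2
    (Finsupp.mem_support_iff.1 him))
  have := coeff_pderiv (i := i) P (m - Finsupp.single i 1)
  rw [h, coeff_zero, tsub_add_cancel_of_le hle] at this
  exact mul_ne_zero (mem_support_iff.1 hm) (Nat.cast_add_one_ne_zero _) this.symm

variable [DecidableEq σ]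

theorem eval_update_of_degreeOf_le_one (h : P.degreeOf i ≤ 1) (x : σ → R) (t : R) :
    eval (update x i t) P = eval x P + (t - x i) * eval x (pderiv i P) := by
  set Q := P - X i * pderiv i P
  -- `P = Q + X i * ∂_i P`, and neither `Q` nor `∂_i P` involves `X i`:
  -- `∂_i Q = -X i * ∂_i ∂_i P = 0`.
  have hQ : Q.degreeOf i = 0 := pderiv_eq_zero_iff.1 (by simp [Q, pderiv_pderiv_self h])
  have hA := degreeOf_pderiv_self_eq_zero h
  calc eval (update x i t) P = eval (update x i t) (Q + X i * pderiv i P) := by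
        rw [sub_add_cancel]
    _ = eval x Q + t * eval x (pderiv i P) := by
        simp [eval_update_of_degreeOf_eq_zero hQ, eval_update_of_degreeOf_eq_zero hA]
    _ = eval x P + (t - x i) * eval x (pderiv i P) := by
        simp only [Q, map_sub, map_mul, eval_X]
        ring

theorem eval_update_iteratedPDeriv_erase {S : Finset σ} (hP : P.IsMultiAffine) (h : i ∈ S)
    (x : σ → R) (t : R) :
    eval (update x i t) (iteratedPDeriv (S.erase i) P) =
      eval x (iteratedPDeriv (S.erase i) P) + (t - x i) * eval x (iteratedPDeriv S P) := by
  rw [iteratedPDeriv_eq_pderiv_erase h]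
  exact eval_update_of_degreeOf_le_one (hP.iteratedPDeriv _ i) x t

theorem eval_update_update (hP : P.IsMultiAffine) {j : σ} (hij : i ≠ j) (x : σ → R) (u v : R) :
    eval (update (update x i (x i + u)) j (x j + v)) P =
      eval x P + u * eval x (pderiv i P) + v * (eval x (pderiv j P) +
        u * eval x (pderiv i (pderiv j P))) := by
  rw [eval_update_of_degreeOf_le_one (hP j), eval_update_of_degreeOf_le_one (hP i),
    eval_update_of_degreeOf_le_one (hP.pderiv j i), update_of_ne hij.symm]
  ring

theorem exists_eval_iteratedPDeriv_ne_zero (hP : P.IsMultiAffine) (h0 : P ≠ 0)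
    (z : σ → R) : ∃ S, eval z (iteratedPDeriv S P) ≠ 0 := by
  induction hd : P.totalDegree using Nat.strong_induction_on generalizing P with
  | _ d ih =>
  rcases Nat.eq_zero_or_pos d with rfl | hd0
  · refine ⟨∅, ?_⟩
    rw [totalDegree_eq_zero_iff_eq_C.1 hd] at h0 ⊢
    simpa using h0
  obtain ⟨i, hi⟩ := exists_degreeOf_ne_zero_of_totalDegree_ne_zero (hd.trans_ne hd0.ne')
  have hlt : (pderiv i P).totalDegree < d := by
    have := totalDegree_pderiv_le i P
    omega
  obtain ⟨S, hS⟩ := ih _ hlt (hP.pderiv i) (mt pderiv_eq_zero_iff.1 hi) rfl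
  refine ⟨insert i S, ?_⟩
  rwa [iteratedPDeriv_insert_of_ne_zero hP fun h => hS (by rw [h, map_zero])]

theorem exists_mem_eval_iteratedPDeriv_ne_zero (hP : P.IsMultiAffine)
    (h : pderiv i P ≠ 0) (z : σ → R) : ∃ S, i ∈ S ∧ eval z (iteratedPDeriv S P) ≠ 0 := by
  obtain ⟨S, hS⟩ := exists_eval_iteratedPDeriv_ne_zero (hP.pderiv i) h z
  refine ⟨insert i S, S.mem_insert_self i, ?_⟩
  rwa [iteratedPDeriv_insert_of_ne_zero hP fun h => hS (by rw [h, map_zero])]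

end CommRing

end MvPolynomial

section ConnectedComponents

open Set

variable {E F : Type*} [TopologicalSpace E] [TopologicalSpace F]

def connectedComponentsIn (Y : Set E) : Set (Set E) := connectedComponentIn Y '' Y

theorem encard_connectedComponentsIn_le_of_forall_exists {Y₁ : Set E} {Y₂ : Set F} {f : E → F}
    (hf : ContinuousOn f Y₁) (hmaps : MapsTo f Y₁ Y₂)
    (hmeet : ∀ y ∈ Y₂, ∃ x ∈ Y₁, f x ∈ connectedComponentIn Y₂ y) :
    (connectedComponentsIn Y₂).encard ≤ (connectedComponentsIn Y₁).encard := by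
  have key : ∀ x ∈ Y₁, ⋃ x' ∈ connectedComponentIn Y₁ x, connectedComponentIn Y₂ (f x') =
      connectedComponentIn Y₂ (f x) := by
    intro x hx
    have hsub : f '' connectedComponentIn Y₁ x ⊆ connectedComponentIn Y₂ (f x) :=
      (isPreconnected_connectedComponentIn.image f
        (hf.mono (connectedComponentIn_subset _ _))).subset_connectedComponentIn
        (mem_image_of_mem f (mem_connectedComponentIn hx))
        ((image_mono (connectedComponentIn_subset _ _)).trans hmaps.image_subset)
    refine (iUnion₂_subset fun x' hx' => ?_).antisymm
      (subset_biUnion_of_mem (u := fun x' => connectedComponentIn Y₂ (f x'))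
        (mem_connectedComponentIn hx))
    rw [connectedComponentIn_eq (hsub (mem_image_of_mem f hx'))]
  calc (connectedComponentsIn Y₂).encard
      ≤ ((fun K => ⋃ x ∈ K, connectedComponentIn Y₂ (f x)) '' connectedComponentsIn Y₁).encard := by
        refine encard_le_encard ?_
        rintro _ ⟨y, hy, rfl⟩
        obtain ⟨x, hx, hfx⟩ := hmeet y hy
        exact ⟨_, mem_image_of_mem _ hx, (key x hx).trans (connectedComponentIn_eq hfx).symm⟩
    _ ≤ (connectedComponentsIn Y₁).encard := encard_image_le _ _

theorem encard_connectedComponentsIn_le_of_surjOn {Y₁ : Set E} {Y₂ : Set F} {f : E → F}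
    (hf : ContinuousOn f Y₁) (hmaps : MapsTo f Y₁ Y₂) (hsurj : SurjOn f Y₁ Y₂) :
    (connectedComponentsIn Y₂).encard ≤ (connectedComponentsIn Y₁).encard :=
  encard_connectedComponentsIn_le_of_forall_exists hf hmaps fun y hy => by
    obtain ⟨x, hx, rfl⟩ := hsurj hy
    exact ⟨x, hx, mem_connectedComponentIn hy⟩

theorem encard_connectedComponentsIn_le_of_subset {Y₁ Y₂ : Set E} (h : Y₁ ⊆ Y₂)
    (hmeet : ∀ y ∈ Y₂, (connectedComponentIn Y₂ y ∩ Y₁).Nonempty) :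
    (connectedComponentsIn Y₂).encard ≤ (connectedComponentsIn Y₁).encard :=
  encard_connectedComponentsIn_le_of_forall_exists continuousOn_id h fun y hy =>
    let ⟨x, hx₂, hx₁⟩ := hmeet y hy
    ⟨x, hx₁, hx₂⟩

theorem encard_connectedComponentsIn_le_inter_of_dense [LocallyConnectedSpace E] {U D : Set E}
    (hU : IsOpen U) (hD : Dense D) :
    (connectedComponentsIn U).encard ≤ (connectedComponentsIn (U ∩ D)).encard :=
  encard_connectedComponentsIn_le_of_subset inter_subset_left fun y hy =>
    let ⟨x, hxC, hxD⟩ := hD.inter_open_nonempty _ hU.connectedComponentIn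
      ⟨y, mem_connectedComponentIn hy⟩
    ⟨x, hxC, connectedComponentIn_subset _ _ hxC, hxD⟩

theorem connectedComponentIn_union_of_mem_left {U V : Set E} (hU : IsOpen U) (hV : IsOpen V)
    (hUV : Disjoint U V) {x : E} (hx : x ∈ U) :
    connectedComponentIn (U ∪ V) x = connectedComponentIn U x := by
  refine (IsPreconnected.subset_connectedComponentIn isPreconnected_connectedComponentIn
    (mem_connectedComponentIn (mem_union_left V hx)) ?_).antisymm
    (connectedComponentIn_mono x subset_union_left)
  refine (isPreconnected_connectedComponentIn.subset_or_subset hU hV hUV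
    (connectedComponentIn_subset _ _)).resolve_right fun hsub => ?_
  exact disjoint_left.1 hUV hx (hsub (mem_connectedComponentIn (mem_union_left V hx)))

theorem encard_connectedComponentsIn_union_le {U V : Set E} (hU : IsOpen U) (hV : IsOpen V)
    (hUV : Disjoint U V) :
    (connectedComponentsIn (U ∪ V)).encard ≤
      (connectedComponentsIn U).encard + (connectedComponentsIn V).encard := by
  refine (encard_le_encard ?_).trans (encard_union_le _ _)
  rintro _ ⟨x, hx | hx, rfl⟩
  · exact Or.inl ⟨x, hx, (connectedComponentIn_union_of_mem_left hU hV hUV hx).symm⟩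
  · refine Or.inr ⟨x, hx, ?_⟩
    rw [union_comm, connectedComponentIn_union_of_mem_left hV hU hUV.symm hx]

theorem encard_connectedComponentsIn_setOf_const_le_one [PreconnectedSpace E] (q : Prop) :
    (connectedComponentsIn {_x : E | q}).encard ≤ 1 := by
  by_cases hq : q
  · refine (encard_le_encard (t := {univ}) ?_).trans_eq (encard_singleton _)
    rintro _ ⟨x, -, rfl⟩
    simp [hq, connectedComponentIn_univ, PreconnectedSpace.connectedComponent_eq_univ]
  · simp [hq, connectedComponentsIn]

end ConnectedComponents

namespace MvPolynomial

open Set Function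

section ZeroSet

variable {ι : Type*} [DecidableEq ι] {P : MvPolynomial ι ℝ} {i j ν : ι} {z : ι → ℝ}

theorem update_mem_connectedComponentIn_of_eval_pderiv_eq_zero (hPi : P.degreeOf i ≤ 1)
    (hz : eval z P = 0) (hi : eval z (pderiv i P) = 0) (t : ℝ) :
    update z i t ∈ connectedComponentIn {x | eval x P = 0} z :=
  (isPreconnected_range (continuous_const.update i continuous_id)).subset_connectedComponentIn
    ⟨z i, update_eq_self i z⟩
    (range_subset_iff.2 fun s => by simp [eval_update_of_degreeOf_le_one hPi, hz, hi]) ⟨t, rfl⟩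

theorem exists_update_update_mem_connectedComponentIn (hP : P.IsMultiAffine) (hz : eval z P = 0)
    (hij : i ≠ j) (hj : eval z (pderiv j P) ≠ 0) :
    ∃ δ > 0, ∃ t,
      update (update z i (z i + δ)) j t ∈ connectedComponentIn {x | eval x P = 0} z := by
  set a := eval z (pderiv i P)
  set b := eval z (pderiv j P)
  set M := eval z (pderiv i (pderiv j P))
  set δ := |b| / (|M| + 1)
  have hδ : 0 < δ := by positivity
  have hden : ∀ u ∈ Icc 0 δ, b + u * M ≠ 0 := by
    rintro u ⟨hu0, huδ⟩ h
    have hbM : |b| ≤ δ * |M| := calc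
      |b| = u * |M| := by rw [eq_neg_of_add_eq_zero_left h, abs_neg, abs_mul, abs_of_nonneg hu0]
      _ ≤ δ * |M| := by gcongr
    have : δ * (|M| + 1) = |b| := div_mul_cancel₀ _ (by positivity)
    linarith
  -- the branch through `z` of the hyperbola `u a + v (b + u M) = 0` in the `(i, j)`-plane
  set γ : ℝ → ι → ℝ := fun u => update (update z i (z i + u)) j (z j + -(u * a) / (b + u * M))
  have hγ : ContinuousOn γ (Icc 0 δ) := fun u hu => ContinuousAt.continuousWithinAt <|
    (continuousAt_const.update i (continuousAt_const.add continuousAt_id)).update j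
      (continuousAt_const.add ((continuousAt_id.mul continuousAt_const).neg.div
        (continuousAt_const.add (continuousAt_id.mul continuousAt_const)) (hden u hu)))
  have hγZ : γ '' Icc 0 δ ⊆ {x | eval x P = 0} := by
    rintro _ ⟨u, hu, rfl⟩
    simp only [γ, mem_ofPred_eq, eval_update_update hP hij, hz]
    field_simp [hden u hu]
    ring
  have hz0 : z ∈ γ '' Icc 0 δ := ⟨0, ⟨le_rfl, hδ.le⟩, by simp [γ]⟩
  exact ⟨δ, hδ, _, (isPreconnected_Icc.image γ hγ).subset_connectedComponentIn hz0 hγZ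
    ⟨δ, ⟨hδ.le, le_rfl⟩, rfl⟩⟩

theorem exists_mem_connectedComponentIn_eval_pderiv_ne_zero_of_pderiv_pderiv (hP : P.IsMultiAffine)
    (hz : eval z P = 0) (hν : eval z (pderiv ν P) = 0)
    (hD : eval z (pderiv ν (pderiv i P)) ≠ 0) :
    ∃ w ∈ connectedComponentIn {x | eval x P = 0} z, eval w (pderiv ν P) ≠ 0 := by
  set D := eval z (pderiv ν (pderiv i P))
  -- The `ν`-line through `z` lies in the zero set and meets `{∂_i P = 0}`, at `z'`; the `i`-line
  -- through `z'` lies in the zero set too, and along it `∂_ν P` has slope `D`.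
  set z' := update z ν (z ν - eval z (pderiv i P) / D)
  have hz' : z' ∈ connectedComponentIn {x | eval x P = 0} z :=
    update_mem_connectedComponentIn_of_eval_pderiv_eq_zero (hP ν) hz hν _
  have hz'Z : z' ∈ {x | eval x P = 0} := connectedComponentIn_subset _ _ hz'
  have hiz' : eval z' (pderiv i P) = 0 := by
    rw [eval_update_of_degreeOf_le_one (hP.pderiv i ν)]
    field_simp
    ring
  have hνν := degreeOf_pderiv_self_eq_zero (hP ν)
  have hνiν : (pderiv i (pderiv ν P)).degreeOf ν = 0 :=
    Nat.le_zero.1 ((degreeOf_pderiv_le i ν _).trans hνν.le)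
  refine ⟨update z' i (z' i + 1), connectedComponentIn_eq hz' ▸
    update_mem_connectedComponentIn_of_eval_pderiv_eq_zero (hP i)
      hz'Z hiz' _, ?_⟩
  rw [eval_update_of_degreeOf_le_one (hP.pderiv ν i), eval_update_of_degreeOf_eq_zero hνν,
    eval_update_of_degreeOf_eq_zero hνiν, hν, pderiv_comm]
  simpa using hD

theorem exists_mem_connectedComponentIn_eval_iteratedPDeriv_ssubset_ne_zero
    (hP : P.IsMultiAffine) (hz : eval z P = 0) {W : Finset ι} (hν : ν ∈ W) (hWν : W ≠ {ν})
    (hW : eval z (iteratedPDeriv W P) ≠ 0) :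
    ∃ z' ∈ connectedComponentIn {x | eval x P = 0} z, ∃ W' ⊂ W, ν ∈ W' ∧
      eval z' (iteratedPDeriv W' P) ≠ 0 := by
  by_cases hmin : ∃ W' ⊂ W, ν ∈ W' ∧ eval z (iteratedPDeriv W' P) ≠ 0
  · exact ⟨z, mem_connectedComponentIn hz, hmin⟩
  push Not at hmin
  -- Now `∂^(W \ k) P (z) = 0` for `k ∈ W \ {ν}`, while `∂^(W \ k) P` is affine in `x k` with
  -- slope `∂^W P (z) ≠ 0` and free of the other variables of `W`: any move inside the zero
  -- set that shifts `x k` and changes no coordinate outside `W` makes it non-zero.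
  have herase : ∀ k ∈ W, k ≠ ν → ν ∈ W.erase k ∧ eval z (iteratedPDeriv (W.erase k) P) = 0 :=
    fun k hk hkν => ⟨Finset.mem_erase.2 ⟨hkν.symm, hν⟩,
      hmin _ (Finset.erase_ssubset hk) (Finset.mem_erase.2 ⟨hkν.symm, hν⟩)⟩
  obtain ⟨i, hi, hiν⟩ : ∃ i ∈ W, i ≠ ν := by
    by_contra! h
    exact hWν (Finset.eq_singleton_iff_unique_mem.2 ⟨hν, h⟩)
  obtain ⟨hνi, hi0⟩ := herase i hi hiν
  by_cases hj : ∃ j ∈ W, j ≠ ν ∧ j ≠ i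
  · obtain ⟨j, hj, hjν, hji⟩ := hj
    obtain ⟨hνj, hj0⟩ := herase j hj hjν
    by_cases hzj : eval z (pderiv j P) = 0
    · refine ⟨_, update_mem_connectedComponentIn_of_eval_pderiv_eq_zero (hP j) hz hzj (z j + 1),
        _, Finset.erase_ssubset hj, hνj, ?_⟩
      rw [eval_update_iteratedPDeriv_erase hP hj, hj0]
      simpa using hW
    · obtain ⟨δ, hδ, t, hmem⟩ := exists_update_update_mem_connectedComponentIn hP hz hji.symm hzj
      refine ⟨_, hmem, _, Finset.erase_ssubset hi, hνi, ?_⟩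
      rw [eval_update_of_degreeOf_eq_zero
        (degreeOf_iteratedPDeriv_of_mem hP (Finset.mem_erase.2 ⟨hji, hj⟩)),
        eval_update_iteratedPDeriv_erase hP hi, hi0]
      simpa [hδ.ne'] using hW
  · push Not at hj
    have hWi : W.erase i = {ν} := Finset.eq_singleton_iff_unique_mem.2 ⟨hνi, fun k hk =>
      by_contra fun hkν => (Finset.mem_erase.1 hk).1 (hj k (Finset.mem_of_mem_erase hk) hkν)⟩
    rw [hWi, iteratedPDeriv_singleton] at hi0
    rw [iteratedPDeriv_eq_pderiv_erase hi, hWi, iteratedPDeriv_singleton, pderiv_comm] at hW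
    obtain ⟨w, hw, hwν⟩ :=
      exists_mem_connectedComponentIn_eval_pderiv_ne_zero_of_pderiv_pderiv hP hz hi0 hW
    exact ⟨w, hw, _, Finset.erase_ssubset hi, hνi, by rwa [hWi, iteratedPDeriv_singleton]⟩

theorem exists_mem_connectedComponentIn_eval_pderiv_ne_zero_of_iteratedPDeriv
    (hP : P.IsMultiAffine) {W : Finset ι} (hν : ν ∈ W) (hz : eval z P = 0)
    (hW : eval z (iteratedPDeriv W P) ≠ 0) :
    ∃ w ∈ connectedComponentIn {x | eval x P = 0} z, eval w (pderiv ν P) ≠ 0 := by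
  induction W using Finset.strongInduction generalizing z with
  | H W ih =>
  by_cases hWν : W = {ν}
  · subst hWν
    exact ⟨z, mem_connectedComponentIn hz, by rwa [iteratedPDeriv_singleton] at hW⟩
  obtain ⟨z', hz', W', hW', hνW', hz'W'⟩ :=
    exists_mem_connectedComponentIn_eval_iteratedPDeriv_ssubset_ne_zero hP hz hν hWν hW
  rw [connectedComponentIn_eq hz']
  exact ih W' hW' hνW' (connectedComponentIn_subset {x | eval x P = 0} z hz') hz'W'

theorem exists_mem_connectedComponentIn_eval_pderiv_ne_zero (hP : P.IsMultiAffine)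
    (hν : pderiv ν P ≠ 0) (hz : eval z P = 0) :
    ∃ w ∈ connectedComponentIn {x | eval x P = 0} z, eval w (pderiv ν P) ≠ 0 :=
  let ⟨_, hνW, hW⟩ := exists_mem_eval_iteratedPDeriv_ne_zero hP hν z
  exists_mem_connectedComponentIn_eval_pderiv_ne_zero_of_iteratedPDeriv hP hνW hz hW

end ZeroSet

section Counting

variable {ι : Type*}

theorem encard_connectedComponentsIn_setOf_le_one_of_totalDegree_eq_zero
    {Q : MvPolynomial ι ℝ} (hQ : Q.totalDegree = 0) (p : ℝ → Prop) :
    (connectedComponentsIn {x : ι → ℝ | p (eval x Q)}).encard ≤ 1 := by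
  rw [totalDegree_eq_zero_iff_eq_C.1 hQ]
  simpa only [eval_C] using encard_connectedComponentsIn_setOf_const_le_one (p (coeff 0 Q))

theorem encard_connectedComponentsIn_ne_zero_le_of_pos_le {A : MvPolynomial ι ℝ}
    (hpos : (connectedComponentsIn {x : ι → ℝ | 0 < eval x A}).encard ≤ 2 ^ (A.totalDegree - 1))
    (hneg : (connectedComponentsIn {x : ι → ℝ | 0 < eval x (-A)}).encard ≤
      2 ^ (A.totalDegree - 1)) :
    (connectedComponentsIn {x : ι → ℝ | eval x A ≠ 0}).encard ≤ 2 ^ A.totalDegree := by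
  rcases Nat.eq_zero_or_pos A.totalDegree with h0 | hA
  · rw [h0, pow_zero]
    exact encard_connectedComponentsIn_setOf_le_one_of_totalDegree_eq_zero h0 (· ≠ 0)
  have hsplit : {x : ι → ℝ | eval x A ≠ 0} = {x | 0 < eval x A} ∪ {x | 0 < eval x (-A)} := by
    ext x
    simp only [mem_ofPred_eq, mem_union, map_neg, neg_pos]
    exact ne_iff_lt_or_gt.trans or_comm
  have hopen : ∀ B : MvPolynomial ι ℝ, IsOpen {x : ι → ℝ | 0 < eval x B} :=
    fun B => isOpen_lt continuous_const (continuous_eval B)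
  calc (connectedComponentsIn {x : ι → ℝ | eval x A ≠ 0}).encard
      ≤ (connectedComponentsIn {x : ι → ℝ | 0 < eval x A}).encard +
          (connectedComponentsIn {x : ι → ℝ | 0 < eval x (-A)}).encard := by
        rw [hsplit]
        refine encard_connectedComponentsIn_union_le (hopen A) (hopen (-A))
          (disjoint_left.2 fun x h₁ h₂ => ?_)
        simp only [mem_ofPred_eq, map_neg, neg_pos] at h₁ h₂
        linarith
    _ ≤ 2 ^ (A.totalDegree - 1) + 2 ^ (A.totalDegree - 1) := add_le_add hpos hneg
    _ = 2 ^ A.totalDegree := by rw [← two_mul, ← pow_succ', Nat.sub_add_cancel hA]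

theorem dense_setOf_eval_ne_zero [Fintype ι] {Q : MvPolynomial ι ℝ} (hQ : Q ≠ 0) :
    Dense {x : ι → ℝ | eval x Q ≠ 0} := by
  refine Metric.dense_iff.2 fun x r hr => not_not.1 fun h => hQ ?_
  refine funext_set (fun i => Metric.ball (x i) r) (fun i => ?_) fun y hy => ?_
  · rw [Real.ball_eq_Ioo]
    exact Ioo_infinite (by linarith)
  · rw [← ball_pi x hr] at hy
    rw [map_zero]
    by_contra hne
    exact h ⟨y, hy, hne⟩

theorem encard_connectedComponentsIn_inter_eval_pderiv_ne_zero_le [DecidableEq ι]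
    {Q : MvPolynomial ι ℝ} {i : ι} (hQ : Q.degreeOf i ≤ 1) {φ : ℝ → ℝ} (hφ : Continuous φ) :
    (connectedComponentsIn ({x | eval x Q ∈ range φ} ∩ {x | eval x (pderiv i Q) ≠ 0})).encard ≤
      (connectedComponentsIn {x | eval x (pderiv i Q) ≠ 0}).encard := by
  have hA := eval_update_of_degreeOf_eq_zero (degreeOf_pderiv_self_eq_zero hQ)
  have hQ' := eval_update_of_degreeOf_le_one hQ
  -- on each line in direction `i` where `∂_i Q ≠ 0`, `Q` is affine with non-zero slope
  refine encard_connectedComponentsIn_le_of_surjOn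
    (f := fun x => update x i (x i + (φ (x i) - eval x Q) / eval x (pderiv i Q))) ?_ ?_ ?_
  · exact fun x hx => ContinuousAt.continuousWithinAt <| continuousAt_id.update i <|
      (continuous_apply i).continuousAt.add <|
        ((hφ.comp (continuous_apply i)).continuousAt.sub (continuous_eval Q).continuousAt).div
          (continuous_eval _).continuousAt hx
  · intro x (hx : eval x (pderiv i Q) ≠ 0)
    refine ⟨⟨x i, ?_⟩, by rwa [mem_ofPred_eq, hA]⟩
    rw [hQ']
    field_simp [hx]
    ring
  · rintro y ⟨⟨s, hs⟩, hy : eval y (pderiv i Q) ≠ 0⟩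
    refine ⟨update y i s, by rwa [mem_ofPred_eq, hA], ?_⟩
    simp only [update_self, update_idem, hA, hQ', hs]
    convert update_eq_self i y using 2
    field_simp [hy]
    ring

variable [Fintype ι] [DecidableEq ι]

theorem encard_connectedComponentsIn_pos_le {Q : MvPolynomial ι ℝ} (hQ : Q.IsMultiAffine) :
    (connectedComponentsIn {x : ι → ℝ | 0 < eval x Q}).encard ≤ 2 ^ (Q.totalDegree - 1) := by
  induction hd : Q.totalDegree using Nat.strong_induction_on generalizing Q with
  | _ d ih =>
  rcases Nat.eq_zero_or_pos d with rfl | hd0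
  · rw [Nat.zero_sub, pow_zero]
    exact encard_connectedComponentsIn_setOf_le_one_of_totalDegree_eq_zero hd _
  obtain ⟨i, hi⟩ := exists_degreeOf_ne_zero_of_totalDegree_ne_zero (hd.trans_ne hd0.ne')
  set A := pderiv i Q
  have hAd : A.totalDegree ≤ d - 1 := hd ▸ totalDegree_pderiv_le i Q
  have hA := hQ.pderiv i
  calc (connectedComponentsIn {x | 0 < eval x Q}).encard
      ≤ (connectedComponentsIn ({x | 0 < eval x Q} ∩ {x | eval x A ≠ 0})).encard :=
        encard_connectedComponentsIn_le_inter_of_dense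
          (isOpen_lt continuous_const (continuous_eval Q))
          (dense_setOf_eval_ne_zero (mt pderiv_eq_zero_iff.1 hi))
    _ ≤ (connectedComponentsIn {x | eval x A ≠ 0}).encard := by
        simpa only [Real.range_exp, mem_Ioi] using
          encard_connectedComponentsIn_inter_eval_pderiv_ne_zero_le (hQ i) Real.continuous_exp
    _ ≤ 2 ^ A.totalDegree := encard_connectedComponentsIn_ne_zero_le_of_pos_le
        (ih _ (by omega) hA rfl) (ih _ (by omega) hA.neg (totalDegree_neg A))
    _ ≤ 2 ^ (d - 1) := pow_le_pow_right₀ one_le_two hAd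

theorem encard_connectedComponentsIn_ne_zero_le {A : MvPolynomial ι ℝ} (hA : A.IsMultiAffine) :
    (connectedComponentsIn {x : ι → ℝ | eval x A ≠ 0}).encard ≤ 2 ^ A.totalDegree :=
  encard_connectedComponentsIn_ne_zero_le_of_pos_le (encard_connectedComponentsIn_pos_le hA)
    (totalDegree_neg A ▸ encard_connectedComponentsIn_pos_le hA.neg)

theorem encard_connectedComponentsIn_zero_le {P : MvPolynomial ι ℝ} (hP : P.IsMultiAffine) :
    (connectedComponentsIn {x : ι → ℝ | eval x P = 0}).encard ≤ 2 ^ (P.totalDegree - 1) := by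
  rcases Nat.eq_zero_or_pos P.totalDegree with h0 | hpos
  · rw [h0, Nat.zero_sub, pow_zero]
    exact encard_connectedComponentsIn_setOf_le_one_of_totalDegree_eq_zero h0 (· = 0)
  obtain ⟨ν, hν⟩ := exists_degreeOf_ne_zero_of_totalDegree_ne_zero hpos.ne'
  set A := pderiv ν P
  calc (connectedComponentsIn {x | eval x P = 0}).encard
      ≤ (connectedComponentsIn ({x | eval x P = 0} ∩ {x | eval x A ≠ 0})).encard :=
        encard_connectedComponentsIn_le_of_subset inter_subset_left fun z hz =>
          let ⟨w, hw, hwA⟩ :=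
            exists_mem_connectedComponentIn_eval_pderiv_ne_zero hP (mt pderiv_eq_zero_iff.1 hν) hz
          ⟨w, hw, connectedComponentIn_subset _ _ hw, hwA⟩
    _ ≤ (connectedComponentsIn {x | eval x A ≠ 0}).encard := by
        simpa only [range_const, mem_singleton_iff] using
          encard_connectedComponentsIn_inter_eval_pderiv_ne_zero_le (hP ν)
            (continuous_const (y := 0))
    _ ≤ 2 ^ A.totalDegree := encard_connectedComponentsIn_ne_zero_le (hP.pderiv ν)
    _ ≤ 2 ^ (P.totalDegree - 1) := pow_le_pow_right₀ one_le_two (totalDegree_pderiv_le ν P)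

end Counting

end MvPolynomial

open MvPolynomial

theorem multiaffine_zero_set_components_le_general (n d : ℕ) (P : MvPolynomial (Fin n) ℝ)
    (hma : ∀ i : Fin n, P.degreeOf i ≤ 1)
    (hdeg : P.totalDegree ≤ d) :
    letI Z : Set (Fin n → ℝ) := {x | eval x P = 0}
    letI comps : Set (Set (Fin n → ℝ)) := {K | ∃ x ∈ Z, K = connectedComponentIn Z x}
    comps.Finite ∧ comps.ncard ≤ 2 ^ (d - 1) := by
  rw [← Set.encard_le_coe_iff_finite_ncard_le]
  calc _ = (connectedComponentsIn {x : Fin n → ℝ | eval x P = 0}).encard := by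
          congr 1
          ext K
          simp [connectedComponentsIn, eq_comm]
    _ ≤ 2 ^ (P.totalDegree - 1) := encard_connectedComponentsIn_zero_le hma
    _ ≤ 2 ^ (d - 1) := pow_le_pow_right₀ one_le_two (by omega)
    _ = ((2 ^ (d - 1) : ℕ) : ℕ∞) := by norm_cast

/-- The real zero set of a non-zero multi-affine polynomial of degree at most `d`
in `n` variables has at most `2^(d-1)` connected components. -/
theorem multiaffine_zero_set_components_le (n d : ℕ) (hn : 1 ≤ n) (hd : 1 ≤ d)
    (P : MvPolynomial (Fin n) ℝ) (hP : P ≠ 0)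
    (hma : ∀ i : Fin n, P.degreeOf i ≤ 1)
    (hdeg : P.totalDegree ≤ d) :
    letI Z : Set (Fin n → ℝ) := {x | eval x P = 0}
    letI comps : Set (Set (Fin n → ℝ)) := {K | ∃ x ∈ Z, K = connectedComponentIn Z x}
    comps.Finite ∧ comps.ncard ≤ 2 ^ (d - 1) :=
  multiaffine_zero_set_components_le_general n d P hma hdeg
end

section
/- Let d, n ∈ ℕ with 1 ≤ d ≤ n, and let P = X_1·X_2⋯X_d − 1 ∈ ℝ[X_1,…,X_n]. Then the real zero set Z(P, ℝ^n) has exactly 2^{d−1} connected components. (This shows the bound 2^{d−1} on the number of connected components of the zero set of a degree-d multi-affine polynomial is sharp.) -/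
/-!
No coordinate `x_1, …, x_d` vanishes on `Z = {x | x_1 ⋯ x_d = 1}`, so the sign vector
`s ∈ {±1}^d` of these coordinates is locally constant on `Z`, and `s_1 ⋯ s_d = 1`. Each fiber of
the sign vector is path-connected: coordinates of equal sign are joined by the geometric path
`t ↦ a (b / a)^t`, which keeps the signs and multiplies the product by `1^t`. Hence the connected
components are the fibers, one for each sign vector with product `1`, i.e. for each element of the
kernel of the surjection `∏ : {±1}^d → {±1}`, of which there are `2^(d-1)`.
-/

open MvPolynomial Real

section ComponentsOfFibers

variable {X Y : Type*} [TopologicalSpace X] [TopologicalSpace Y] [DiscreteTopology Y]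
  {Z : Set X} {g : X → Y}

theorem connectedComponentIn_eq_inter_preimage (hg : ContinuousOn g Z)
    (hfib : ∀ y, IsPreconnected (Z ∩ g ⁻¹' {y})) {x : X} (hx : x ∈ Z) :
    connectedComponentIn Z x = Z ∩ g ⁻¹' {g x} := by
  refine (Set.subset_inter (connectedComponentIn_subset Z x) fun z hz => ?_).antisymm
    ((hfib (g x)).subset_connectedComponentIn ⟨hx, rfl⟩ Set.inter_subset_left)
  exact isPreconnected_connectedComponentIn.constant
    (hg.mono (connectedComponentIn_subset Z x)) hz (mem_connectedComponentIn hx)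

theorem ncard_connectedComponentIn_eq_ncard_image (hg : ContinuousOn g Z)
    (hfib : ∀ y, IsPreconnected (Z ∩ g ⁻¹' {y})) :
    {K | ∃ x ∈ Z, K = connectedComponentIn Z x}.ncard = (g '' Z).ncard := by
  have hcomp : {K | ∃ x ∈ Z, K = connectedComponentIn Z x} =
      (fun y => Z ∩ g ⁻¹' {y}) '' (g '' Z) := by
    ext K
    simp only [Set.mem_ofPred_eq, Set.mem_image, exists_exists_and_eq_and]
    refine exists_congr fun x => and_congr_right fun hx => ?_
    rw [connectedComponentIn_eq_inter_preimage hg hfib hx, eq_comm]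
  rw [hcomp]
  refine Set.InjOn.ncard_image ?_
  rintro _ ⟨x, hx, rfl⟩ y - (hxy : Z ∩ g ⁻¹' {g x} = Z ∩ g ⁻¹' {y})
  have hx' : x ∈ Z ∩ g ⁻¹' {y} := hxy ▸ ⟨hx, rfl⟩
  exact hx'.2

end ComponentsOfFibers

theorem ncard_units_int_prod_eq_one (ι : Type*) [Fintype ι] [Nonempty ι] :
    {s : ι → ℤˣ | ∏ i, s i = 1}.ncard = 2 ^ (Fintype.card ι - 1) := by
  classical
  let prodHom : (ι → ℤˣ) →* ℤˣ :=
    { toFun := fun s => ∏ i, s i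
      map_one' := Finset.prod_const_one
      map_mul' := fun _ _ => Finset.prod_mul_distrib }
  have hprodHom : Function.Surjective prodHom := fun u =>
    ⟨Pi.mulSingle (Classical.arbitrary ι) u, Fintype.prod_pi_mulSingle' _ _⟩
  have hcard := prodHom.ker.card_mul_index
  rw [Subgroup.index_ker, MonoidHom.range_eq_top.mpr hprodHom, Subgroup.card_top, Nat.card_pi,
    Nat.card_eq_fintype_card (α := ℤˣ), Fintype.card_units_int, Finset.prod_const, Finset.card_univ,
    ← pow_sub_one_mul Fintype.card_ne_zero] at hcard
  rw [← Nat.mul_right_cancel (by norm_num) hcard]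
  rfl

/-- The linear branch is only used on coordinates that the product does not constrain. -/
noncomputable def signPreservingPath (a b t : ℝ) : ℝ :=
  if 0 < a * b then a * exp (t * log (b / a)) else a + t * (b - a)

namespace signPreservingPath

variable (a b : ℝ)

theorem continuous : Continuous (signPreservingPath a b) := by
  unfold signPreservingPath
  split <;> fun_prop

@[simp] theorem apply_zero : signPreservingPath a b 0 = a := by
  simp [signPreservingPath]

@[simp] theorem apply_one : signPreservingPath a b 1 = b := by
  unfold signPreservingPath
  split_ifs with h
  · have ha : a ≠ 0 := left_ne_zero_of_mul h.ne'
    rw [one_mul, exp_log (div_pos_iff.2 ((mul_pos_iff.1 h).imp And.symm And.symm))]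
    field_simp
  · ring

theorem of_mul_pos {a b : ℝ} (h : 0 < a * b) (t : ℝ) :
    signPreservingPath a b t = a * exp (t * log (b / a)) := if_pos h

end signPreservingPath

section SignPattern

variable {ι κ : Type*} {f : ι → κ} {x y : κ → ℝ} {i : ι}

noncomputable def signPattern (f : ι → κ) (x : κ → ℝ) : ι → ℤˣ :=
  fun i => if 0 < x (f i) then 1 else -1

theorem signPattern_mul_abs (x : κ → ℝ) (i : ι) :
    ((signPattern f x i : ℤ) : ℝ) * |x (f i)| = x (f i) := by
  unfold signPattern
  split_ifs with h
  · simp [abs_of_pos h]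
  · simp [abs_of_nonpos (not_lt.1 h)]

theorem mul_pos_of_signPattern_eq (hx : x (f i) ≠ 0) (hy : y (f i) ≠ 0)
    (h : signPattern f x i = signPattern f y i) : 0 < x (f i) * y (f i) := by
  unfold signPattern at h
  split_ifs at h with hx' hy' hy'
  · exact mul_pos hx' hy'
  · exact absurd h (by decide)
  · exact absurd h (by decide)
  · exact mul_pos_of_neg_of_neg ((not_lt.1 hx').lt_of_ne hx) ((not_lt.1 hy').lt_of_ne hy)

theorem continuousOn_signPattern :
    ContinuousOn (signPattern f) {x | ∀ i, x (f i) ≠ 0} := by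
  refine continuousOn_pi.2 fun i => ContinuousOn.if ?_ continuousOn_const continuousOn_const
  rintro x ⟨hx, hfr⟩
  exact absurd (frontier_lt_subset_eq continuous_const (continuous_apply (f i)) hfr).symm (hx i)

variable [Fintype ι]

theorem ne_zero_of_prod_eq_one (hx : ∏ i, x (f i) = 1) (i : ι) : x (f i) ≠ 0 :=
  Finset.prod_ne_zero_iff.1 (hx ▸ one_ne_zero) i (Finset.mem_univ i)

theorem prod_signPattern (hx : ∏ i, x (f i) = 1) : ∏ i, signPattern f x i = 1 := by
  have h : (∏ i, ((signPattern f x i : ℤ) : ℝ)) * |∏ i, x (f i)| = ∏ i, x (f i) := by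
    rw [Finset.abs_prod, ← Finset.prod_mul_distrib]
    exact Finset.prod_congr rfl fun i _ => signPattern_mul_abs x i
  rw [hx, abs_one, mul_one] at h
  exact Units.val_eq_one.1 (by exact_mod_cast h)

theorem image_signPattern (hf : f.Injective) :
    signPattern f '' {x : κ → ℝ | ∏ i, x (f i) = 1} = {s : ι → ℤˣ | ∏ i, s i = 1} := by
  refine Set.Subset.antisymm ?_ fun s hs => ?_
  · rintro _ ⟨x, hx, rfl⟩
    exact prod_signPattern hx
  have hxf : ∀ i, Function.extend f (fun i => ((s i : ℤ) : ℝ)) 0 (f i) = s i :=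
    hf.extend_apply _ _
  refine ⟨Function.extend f (fun i => ((s i : ℤ) : ℝ)) 0, ?_, funext fun i => ?_⟩
  · simp only [Set.mem_ofPred_eq, hxf]
    have h := congrArg (fun u : ℤˣ => ((u : ℤ) : ℝ)) hs
    push_cast [Units.coe_prod] at h
    exact h
  · simp only [signPattern, hxf]
    rcases Int.units_eq_one_or (s i) with h | h <;> simp [h]

theorem prod_signPreservingPath (hx : ∏ i, x (f i) = 1) (hy : ∏ i, y (f i) = 1)
    (hxy : ∀ i, 0 < x (f i) * y (f i)) (t : ℝ) :
    ∏ i, signPreservingPath (x (f i)) (y (f i)) t = 1 := by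
  have hlog : ∑ i, log (y (f i) / x (f i)) = 0 := by
    rw [← log_prod fun i _ => div_ne_zero (ne_zero_of_prod_eq_one hy i)
      (ne_zero_of_prod_eq_one hx i), Finset.prod_div_distrib, hx, hy, div_one, log_one]
  simp_rw [signPreservingPath.of_mul_pos (hxy _), Finset.prod_mul_distrib, hx, one_mul,
    ← exp_sum, ← Finset.mul_sum, hlog, mul_zero, exp_zero]

theorem joinedIn_signPattern_fiber {s : ι → ℤˣ}
    (hx : x ∈ {x | ∏ i, x (f i) = 1} ∩ signPattern f ⁻¹' {s})
    (hy : y ∈ {x | ∏ i, x (f i) = 1} ∩ signPattern f ⁻¹' {s}) :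
    JoinedIn ({x | ∏ i, x (f i) = 1} ∩ signPattern f ⁻¹' {s}) x y := by
  have hxy : ∀ i, 0 < x (f i) * y (f i) := fun i =>
    mul_pos_of_signPattern_eq (ne_zero_of_prod_eq_one hx.1 i) (ne_zero_of_prod_eq_one hy.1 i)
      (congrFun (hx.2.trans hy.2.symm) i)
  refine JoinedIn.ofLine (f := fun t j => signPreservingPath (x j) (y j) t)
    (continuous_pi fun j => signPreservingPath.continuous _ _).continuousOn
    (by simp) (by simp) ?_
  rintro _ ⟨t, -, rfl⟩
  refine ⟨prod_signPreservingPath hx.1 hy.1 hxy t, hx.2 ▸ funext fun i => ?_⟩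
  have hsign : 0 < signPreservingPath (x (f i)) (y (f i)) t ↔ 0 < x (f i) := by
    rw [signPreservingPath.of_mul_pos (hxy i), mul_pos_iff_of_pos_right (exp_pos _)]
  simp only [signPattern, hsign]

theorem isPreconnected_signPattern_fiber (s : ι → ℤˣ) :
    IsPreconnected ({x : κ → ℝ | ∏ i, x (f i) = 1} ∩ signPattern f ⁻¹' {s}) := by
  rcases Set.eq_empty_or_nonempty ({x : κ → ℝ | ∏ i, x (f i) = 1} ∩ signPattern f ⁻¹' {s})
    with h | h
  · exact h ▸ isPreconnected_empty
  · exact (isPathConnected_iff.2 ⟨h, fun x hx y hy => joinedIn_signPattern_fiber hx hy⟩)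
      |>.isConnected.isPreconnected

theorem ncard_connectedComponentIn_prod_eq_one [Nonempty ι] (hf : f.Injective) :
    {K | ∃ x ∈ {x : κ → ℝ | ∏ i, x (f i) = 1},
      K = connectedComponentIn {x : κ → ℝ | ∏ i, x (f i) = 1} x}.ncard =
      2 ^ (Fintype.card ι - 1) := by
  rw [ncard_connectedComponentIn_eq_ncard_image (Z := {x : κ → ℝ | ∏ i, x (f i) = 1})
      (continuousOn_signPattern.mono fun _ hx => ne_zero_of_prod_eq_one hx)
      isPreconnected_signPattern_fiber,
    image_signPattern hf, ncard_units_int_prod_eq_one]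

end SignPattern

/-- The zero set of `X_1 ⋯ X_d - 1` in `ℝ^n` has exactly `2^(d-1)` connected components. -/
theorem product_minus_one_components (d n : ℕ) (hd : 1 ≤ d) (hdn : d ≤ n) :
    letI P : MvPolynomial (Fin n) ℝ := (∏ i : Fin d, X (Fin.castLE hdn i)) - 1
    letI Z : Set (Fin n → ℝ) := {x | eval x P = 0}
    {K | ∃ x ∈ Z, K = connectedComponentIn Z x}.ncard = 2 ^ (d - 1) := by
  simp only [map_sub, map_prod, eval_X, map_one, sub_eq_zero]
  have : Nonempty (Fin d) := ⟨⟨0, hd⟩⟩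
  rw [ncard_connectedComponentIn_prod_eq_one (Fin.castLE_injective hdn), Fintype.card_fin]
end

section
/- Let 1 ≤ m < n, let P₁ ∈ ℝ[X_1,…,X_m] and P₂ ∈ ℝ[X_{m+1},…,X_n] be non-constant multi-affine polynomials, and set P = P₁·P₂ ∈ ℝ[X_1,…,X_n]. Then the real zero set Z(P, ℝ^n) is non-empty and connected; in particular it has exactly one connected component. -/
open MvPolynomial

private lemma ma_notMem_vars {n : ℕ} {p : MvPolynomial (Fin n) ℝ} {j : Fin n}
    (h : p.degreeOf j = 0) : j ∉ p.vars := by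
  intro hj
  obtain ⟨d, hd, hjd⟩ := (mem_vars j).1 hj
  have h1 := monomial_le_degreeOf j hd
  rw [h] at h1
  exact (Finsupp.mem_support_iff.1 hjd) (Nat.le_zero.1 h1)

private lemma ma_eval_congr {n : ℕ} {p : MvPolynomial (Fin n) ℝ} {x y : Fin n → ℝ}
    (h : ∀ j ∈ p.vars, x j = y j) : eval x p = eval y p :=
  eval₂Hom_congr' rfl (fun j hj _ => h j hj) rfl

private lemma ma_affine_eval {n : ℕ} (p : MvPolynomial (Fin n) ℝ) (i : Fin n)
    (h : p.degreeOf i ≤ 1) (x : Fin n → ℝ) (t : ℝ) :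
    eval (Function.update x i t) p
      = eval (Function.update x i 0) p
        + t * (eval (Function.update x i 1) p - eval (Function.update x i 0) p) := by
  rw [eval_eq, eval_eq, eval_eq, ← Finset.sum_sub_distrib, Finset.mul_sum,
    ← Finset.sum_add_distrib]
  refine Finset.sum_congr rfl fun s hs => ?_
  have hsi : s i ≤ 1 := le_trans (monomial_le_degreeOf i hs) h
  by_cases h0 : s i = 0
  · have hns : i ∉ s.support := fun hcon => (Finsupp.mem_support_iff.1 hcon) h0
    have key : ∀ c : ℝ, (∏ j ∈ s.support, Function.update x i c j ^ s j)
        = ∏ j ∈ s.support, x j ^ s j := by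
      intro c
      refine Finset.prod_congr rfl fun j hj => ?_
      have hne : j ≠ i := by rintro rfl; exact hns hj
      rw [Function.update_of_ne hne _ _]
    rw [key, key, key]; ring
  · have h1 : s i = 1 := by omega
    have his : i ∈ s.support := Finsupp.mem_support_iff.2 h0
    have key : ∀ c : ℝ, (∏ j ∈ s.support, Function.update x i c j ^ s j)
        = c * ∏ j ∈ s.support.erase i, x j ^ s j := by
      intro c
      rw [← Finset.mul_prod_erase _ _ his, Function.update_self, h1, pow_one]
      congr 1
      refine Finset.prod_congr rfl fun j hj => ?_
      rw [Function.update_of_ne (Finset.ne_of_mem_erase hj) _ _]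
    rw [key, key, key]; ring

private lemma ma_degreeOf_aeval {n : ℕ} (g : Fin n → MvPolynomial (Fin n) ℝ) (i : Fin n)
    (hg : ∀ j, (g j).degreeOf i = 0) (p : MvPolynomial (Fin n) ℝ) :
    (aeval g p).degreeOf i = 0 := by
  rw [p.as_sum, map_sum]
  refine Nat.le_zero.1 (le_trans (degreeOf_sum_le _ _ _) (Finset.sup_le fun s hs => ?_))
  rw [aeval_monomial]
  refine le_trans (degreeOf_mul_le _ _ _) ?_
  have h1 : degreeOf i (algebraMap ℝ (MvPolynomial (Fin n) ℝ) (coeff s p)) = 0 := by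
    rw [MvPolynomial.algebraMap_eq]; exact degreeOf_C _ _
  have h2 : degreeOf i (s.prod fun j e => g j ^ e) = 0 := by
    rw [Finsupp.prod]
    refine Nat.le_zero.1 (le_trans (degreeOf_prod_le _ _ _)
      (le_of_eq (Finset.sum_eq_zero fun j _ => ?_)))
    exact Nat.le_zero.1 (le_trans (degreeOf_pow_le _ _ _) (by rw [hg j, Nat.mul_zero]))
  omega

private lemma ma_eval_aeval {n : ℕ} (x : Fin n → ℝ) (g : Fin n → MvPolynomial (Fin n) ℝ)
    (p : MvPolynomial (Fin n) ℝ) :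
    eval x (aeval g p) = eval (fun j => eval x (g j)) p := by
  induction p using MvPolynomial.induction_on with
  | C a => simp
  | add p q hp hq => simp only [map_add, hp, hq]
  | mul_X p i hp => simp only [map_mul, aeval_X, eval_X, hp]

private lemma ma_exists_zero {n : ℕ} (p : MvPolynomial (Fin n) ℝ)
    (hma : ∀ i, p.degreeOf i ≤ 1) (hnc : 0 < p.totalDegree) :
    ∃ x : Fin n → ℝ, eval x p = 0 := by
  classical
  have hex : ∃ i, p.degreeOf i ≠ 0 := by
    by_contra hcon
    push_neg at hcon
    have ht : p.totalDegree = 0 := by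
      rw [totalDegree]
      refine Nat.le_zero.1 (Finset.sup_le fun s hs => ?_)
      have hs0 : s = 0 := by
        ext j
        simp only [Finsupp.coe_zero, Pi.zero_apply]
        have h3 := monomial_le_degreeOf j hs
        rw [hcon j] at h3
        omega
      simp [hs0]
    omega
  obtain ⟨i, hi⟩ := hex
  set g : Fin n → MvPolynomial (Fin n) ℝ := fun j => if j = i then 0 else X j with hg
  have hQ : (aeval g p).degreeOf i = 0 := by
    refine ma_degreeOf_aeval g i (fun j => ?_) p
    by_cases hj : j = i
    · simp [hg, hj]
    · simp [hg, hj, degreeOf_X, Ne.symm hj]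
  have hne : p ≠ aeval g p := fun h => hi (by rw [h]; exact hQ)
  obtain ⟨x, hx⟩ : ∃ x : Fin n → ℝ, eval x p ≠ eval x (aeval g p) := by
    by_contra hcon
    push_neg at hcon
    exact hne (MvPolynomial.funext hcon)
  have hxy : eval x (aeval g p) = eval (Function.update x i 0) p := by
    rw [ma_eval_aeval]
    refine ma_eval_congr fun j _ => ?_
    by_cases hj : j = i
    · subst hj; simp [hg]
    · simp [hg, hj, Function.update_of_ne hj]
  rw [hxy] at hx
  have key := ma_affine_eval p i (hma i) x (x i)
  rw [Function.update_eq_self] at key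
  set c0 := eval (Function.update x i 0) p with hc0
  set d := eval (Function.update x i 1) p - c0 with hd0
  have hd : d ≠ 0 := by
    intro h0
    rw [h0, mul_zero, add_zero] at key
    exact hx key
  refine ⟨Function.update x i (-c0 / d), ?_⟩
  rw [ma_affine_eval p i (hma i) x (-c0 / d), ← hc0, ← hd0, div_mul_cancel₀ _ hd]
  ring

private lemma ma_joinedIn_segment {n : ℕ} {S : Set (Fin n → ℝ)} {u v : Fin n → ℝ}
    (h : ∀ t : ℝ, t ∈ Set.Icc (0:ℝ) 1 → ((1 - t) • u + t • v) ∈ S) : JoinedIn S u v := by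
  have hcont : Continuous fun t : unitInterval => (1 - (t : ℝ)) • u + (t : ℝ) • v := by
    fun_prop
  exact ⟨⟨⟨fun t => (1 - (t : ℝ)) • u + (t : ℝ) • v, hcont⟩, by simp, by simp⟩,
    fun t => h t t.2⟩

/-- If `P₁` is a non-constant multi-affine polynomial in the variables `X_1,…,X_m` and
`P₂` is a non-constant multi-affine polynomial in the variables `X_{m+1},…,X_n`, then the
real zero set of `P₁ * P₂` is non-empty and connected. -/
theorem multiaffine_product_zero_set_connected (m n : ℕ) (hm : 1 ≤ m) (hmn : m < n)
    (P₁ P₂ : MvPolynomial (Fin n) ℝ)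
    (hP₁vars : ∀ i : Fin n, m ≤ (i : ℕ) → P₁.degreeOf i = 0)
    (hP₂vars : ∀ i : Fin n, (i : ℕ) < m → P₂.degreeOf i = 0)
    (h₁ma : ∀ i : Fin n, P₁.degreeOf i ≤ 1)
    (h₂ma : ∀ i : Fin n, P₂.degreeOf i ≤ 1)
    (h₁nc : 0 < P₁.totalDegree) (h₂nc : 0 < P₂.totalDegree) :
    IsConnected {x : Fin n → ℝ | eval x (P₁ * P₂) = 0} := by
  classical
  obtain ⟨a, ha⟩ := ma_exists_zero P₁ h₁ma h₁nc
  obtain ⟨b, hb⟩ := ma_exists_zero P₂ h₂ma h₂nc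
  set S := {x : Fin n → ℝ | eval x (P₁ * P₂) = 0} with hSdef
  have hS : ∀ x, x ∈ S ↔ eval x P₁ = 0 ∨ eval x P₂ = 0 := by
    intro x
    simp [hSdef, Set.mem_setOf_eq, mul_eq_zero]
  have hvars₁ : ∀ j ∈ P₁.vars, (j : ℕ) < m := by
    intro j hj
    by_contra hnot
    exact ma_notMem_vars (hP₁vars j (le_of_not_gt hnot)) hj
  have hvars₂ : ∀ j ∈ P₂.vars, ¬ (j : ℕ) < m := by
    intro j hj hlt
    exact ma_notMem_vars (hP₂vars j hlt) hj
  set p : Fin n → ℝ := fun j => if (j : ℕ) < m then a j else b j with hp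
  have hpP₁ : eval p P₁ = 0 := by
    rw [ma_eval_congr (y := a) (fun j hj => by simp [hp, hvars₁ j hj])]
    exact ha
  have hpS : p ∈ S := (hS p).2 (Or.inl hpP₁)
  have hjoin : ∀ x ∈ S, JoinedIn S x p := by
    intro x hx
    rcases (hS x).1 hx with h1 | h2
    · set q : Fin n → ℝ := fun j => if (j : ℕ) < m then x j else b j with hq
      have hxq : JoinedIn S x q := by
        refine ma_joinedIn_segment fun t ht => ?_
        refine (hS _).2 (Or.inl ?_)
        rw [ma_eval_congr (y := x) (fun j hj => ?_)]
        · exact h1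
        · have hjm := hvars₁ j hj
          simp only [Pi.add_apply, Pi.smul_apply, smul_eq_mul, hq, if_pos hjm]
          ring
      have hqp : JoinedIn S q p := by
        refine ma_joinedIn_segment fun t ht => ?_
        refine (hS _).2 (Or.inr ?_)
        rw [ma_eval_congr (y := b) (fun j hj => ?_)]
        · exact hb
        · have hjm := hvars₂ j hj
          simp only [Pi.add_apply, Pi.smul_apply, smul_eq_mul, hq, hp, if_neg hjm]
          ring
      exact hxq.trans hqp
    · set q : Fin n → ℝ := fun j => if (j : ℕ) < m then a j else x j with hq
      have hxq : JoinedIn S x q := by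
        refine ma_joinedIn_segment fun t ht => ?_
        refine (hS _).2 (Or.inr ?_)
        rw [ma_eval_congr (y := x) (fun j hj => ?_)]
        · exact h2
        · have hjm := hvars₂ j hj
          simp only [Pi.add_apply, Pi.smul_apply, smul_eq_mul, hq, if_neg hjm]
          ring
      have hqp : JoinedIn S q p := by
        refine ma_joinedIn_segment fun t ht => ?_
        refine (hS _).2 (Or.inl ?_)
        rw [ma_eval_congr (y := a) (fun j hj => ?_)]
        · exact ha
        · have hjm := hvars₁ j hj
          simp only [Pi.add_apply, Pi.smul_apply, smul_eq_mul, hq, hp, if_pos hjm]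
          ring
      exact hxq.trans hqp
  have hpc : IsPathConnected S := ⟨p, hpS, fun {y} hy => (hjoin y hy).symm⟩
  exact hpc.isConnected
end

section
/- Fix k ∈ ℕ, k ≥ 1, and let n ≥ k. Define P₁ = σ_{1,n} − k, P₂ = σ_{2,n} − k(k−1)/2, and P₃ = (4k−6)·σ_{3,n} − 4·σ_{4,n} − k(k−1)²(k−2)/2 in ℝ[X_1,…,X_n]. Then the common real zero set {x ∈ ℝ^n : P₁(x) = P₂(x) = P₃(x) = 0} is exactly the set of points of {0,1}^n having exactly k coordinates equal to 1; in particular it is a finite set of cardinality binom(n, k). -/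
/-!
By Newton's identities, once `σ₁ = k` and `σ₂ = k(k-1)/2` the polynomial `P₃` agrees with the sum
of squares `∑ xᵢ²(xᵢ - 1)²`, so the zero set lies in `{0,1}ⁿ`. On the indicator vector of a set
`s` each `σⱼ` takes the value `(#s).choose j`, so there `σ₁ = k` says `#s = k` and the other two
equations follow.
-/

open MvPolynomial Finset

namespace MvPolynomial

variable (σ R : Type*) [Fintype σ] [CommRing R]

theorem psum_two_eq_esymm : psum σ R 2 = esymm σ R 1 ^ 2 - 2 * esymm σ R 2 := by
  rw [psum_eq_mul_esymm_sub_sum σ R 2 two_pos, sum_filter,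
    Nat.sum_antidiagonal_eq_sum_range_succ_mk]
  simp [sum_range_succ]
  ring

theorem psum_three_eq_esymm :
    psum σ R 3 = esymm σ R 1 ^ 3 - 3 * esymm σ R 1 * esymm σ R 2 + 3 * esymm σ R 3 := by
  rw [psum_eq_mul_esymm_sub_sum σ R 3 three_pos, sum_filter,
    Nat.sum_antidiagonal_eq_sum_range_succ_mk]
  simp [sum_range_succ, psum_two_eq_esymm]
  ring

theorem psum_four_eq_esymm :
    psum σ R 4 = esymm σ R 1 ^ 4 - 4 * esymm σ R 1 ^ 2 * esymm σ R 2 + 2 * esymm σ R 2 ^ 2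
      + 4 * esymm σ R 1 * esymm σ R 3 - 4 * esymm σ R 4 := by
  rw [psum_eq_mul_esymm_sub_sum σ R 4 four_pos, sum_filter,
    Nat.sum_antidiagonal_eq_sum_range_succ_mk]
  simp [sum_range_succ, psum_two_eq_esymm, psum_three_eq_esymm]
  ring

end MvPolynomial

variable {σ : Type*} [Fintype σ]

theorem sum_sq_mul_sub_one_sq_eq_of_eval_esymm {x : σ → ℝ} {k : ℝ}
    (h₁ : eval x (esymm σ ℝ 1) = k) (h₂ : eval x (esymm σ ℝ 2) = k * (k - 1) / 2) :
    ∑ i, x i ^ 2 * (x i - 1) ^ 2 =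
      (4 * k - 6) * eval x (esymm σ ℝ 3) - 4 * eval x (esymm σ ℝ 4)
        - k * (k - 1) ^ 2 * (k - 2) / 2 := by
  have hpsum : ∑ i, x i ^ 2 * (x i - 1) ^ 2 =
      eval x (psum σ ℝ 4 - 2 * psum σ ℝ 3 + psum σ ℝ 2) := by
    simp only [psum, map_add, map_sub, map_mul, map_sum, map_pow, eval_X, map_ofNat, mul_sum,
      ← sum_sub_distrib, ← sum_add_distrib]
    exact sum_congr rfl fun i _ => by ring
  rw [hpsum, psum_four_eq_esymm, psum_three_eq_esymm, psum_two_eq_esymm]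
  simp only [map_add, map_sub, map_mul, map_pow, map_ofNat, h₁, h₂]
  ring

theorem eval_esymm_indicator_one {R : Type*} [CommSemiring R] (s : Finset σ) (j : ℕ) :
    eval ((s : Set σ).indicator 1) (esymm σ R j) = (#s).choose j := by
  classical
  simp only [esymm, map_sum, map_prod, eval_X, Set.indicator_apply, mem_coe, Pi.one_apply,
    prod_boole, ← subset_iff]
  rw [sum_boole, ← card_powersetCard]
  congr 2
  ext t
  simp [and_comm]

theorem sum_sq_mul_sub_one_sq_eq_zero_iff {x : σ → ℝ} :
    ∑ i, x i ^ 2 * (x i - 1) ^ 2 = 0 ↔ ∀ i, x i = 0 ∨ x i = 1 := by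
  rw [sum_eq_zero_iff_of_nonneg fun i _ => by positivity]
  simp [sub_eq_zero]

theorem forall_eq_zero_or_eq_one_iff_exists_eq_indicator_one {R : Type*} [MulZeroOneClass R]
    [Nontrivial R] {x : σ → R} :
    (∀ i, x i = 0 ∨ x i = 1) ↔ ∃ s : Finset σ, (s : Set σ).indicator 1 = x := by
  constructor
  · intro hx
    refine ⟨(Set.toFinite {i | x i = 1}).toFinset, funext fun i => ?_⟩
    rcases hx i with h | h <;> simp [h]
  · rintro ⟨s, rfl⟩ i
    by_cases h : i ∈ s <;> simp [h]

open scoped Classical in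
noncomputable def zeroOneVectors (σ : Type*) [Fintype σ] (k : ℕ) : Finset (σ → ℝ) :=
  (powersetCard k univ).image fun s : Finset σ => (s : Set σ).indicator 1

theorem mem_zeroOneVectors {k : ℕ} {x : σ → ℝ} :
    x ∈ zeroOneVectors σ k ↔ ∃ s : Finset σ, #s = k ∧ (s : Set σ).indicator 1 = x := by
  simp [zeroOneVectors]

theorem card_zeroOneVectors (k : ℕ) : #(zeroOneVectors σ k) = (Fintype.card σ).choose k := by
  classical
  rw [zeroOneVectors, card_image_of_injective, card_powersetCard, card_univ]
  exact fun s t h => coe_injective (Set.indicator_one_inj ℝ h)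

theorem coe_zeroOneVectors (k : ℕ) :
    (zeroOneVectors σ k : Set (σ → ℝ)) =
      {x | (∀ i, x i = 0 ∨ x i = 1) ∧ {i | x i = 1}.ncard = k} := by
  ext x
  simp only [forall_eq_zero_or_eq_one_iff_exists_eq_indicator_one, mem_coe,
    mem_zeroOneVectors]
  constructor
  · rintro ⟨s, hk, rfl⟩
    exact ⟨⟨s, rfl⟩, by simpa [Set.indicator_eq_one_iff_mem] using hk⟩
  · rintro ⟨⟨s, rfl⟩, hk⟩
    exact ⟨s, by simpa [Set.indicator_eq_one_iff_mem] using hk, rfl⟩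

theorem setOf_eval_esymm_eq_zeroOneVectors (k : ℕ) :
    {x : σ → ℝ | eval x (esymm σ ℝ 1) = k ∧ eval x (esymm σ ℝ 2) = k * (k - 1) / 2 ∧
      (4 * k - 6) * eval x (esymm σ ℝ 3) - 4 * eval x (esymm σ ℝ 4) =
        k * (k - 1) ^ 2 * (k - 2) / 2} =
      (zeroOneVectors σ k : Set (σ → ℝ)) := by
  ext x
  simp only [mem_coe, mem_zeroOneVectors]
  constructor
  · rintro ⟨h₁, h₂, h₃⟩
    have h01 : ∀ i, x i = 0 ∨ x i = 1 := by
      rw [← sum_sq_mul_sub_one_sq_eq_zero_iff, sum_sq_mul_sub_one_sq_eq_of_eval_esymm h₁ h₂]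
      linarith
    obtain ⟨s, rfl⟩ := forall_eq_zero_or_eq_one_iff_exists_eq_indicator_one.mp h01
    refine ⟨s, ?_, rfl⟩
    simpa using (eval_esymm_indicator_one s 1).symm.trans h₁
  · rintro ⟨s, rfl, rfl⟩
    have h₁ : eval ((s : Set σ).indicator 1) (esymm σ ℝ 1) = #s := by
      rw [eval_esymm_indicator_one, Nat.choose_one_right]
    have h₂ : eval ((s : Set σ).indicator 1) (esymm σ ℝ 2) = #s * (#s - 1) / 2 := by
      rw [eval_esymm_indicator_one, Nat.cast_choose_two]
    have h₃ := sum_sq_mul_sub_one_sq_eq_of_eval_esymm h₁ h₂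
    rw [sum_sq_mul_sub_one_sq_eq_zero_iff.mpr
      (forall_eq_zero_or_eq_one_iff_exists_eq_indicator_one.mpr ⟨s, rfl⟩)] at h₃
    exact ⟨h₁, h₂, by linarith⟩

theorem three_polys_zero_set_general (k n : ℕ) :
    letI P₁ : MvPolynomial (Fin n) ℝ := esymm (Fin n) ℝ 1 - C (k : ℝ)
    letI P₂ : MvPolynomial (Fin n) ℝ :=
      esymm (Fin n) ℝ 2 - C ((k : ℝ) * ((k : ℝ) - 1) / 2)
    letI P₃ : MvPolynomial (Fin n) ℝ :=
      C (4 * (k : ℝ) - 6) * esymm (Fin n) ℝ 3 - 4 * esymm (Fin n) ℝ 4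
        - C ((k : ℝ) * ((k : ℝ) - 1) ^ 2 * ((k : ℝ) - 2) / 2)
    letI V : Set (Fin n → ℝ) := {x | eval x P₁ = 0 ∧ eval x P₂ = 0 ∧ eval x P₃ = 0}
    V = {x | (∀ i, x i = 0 ∨ x i = 1) ∧ {i | x i = 1}.ncard = k} ∧
      V.Finite ∧ V.ncard = n.choose k := by
  simp only [map_sub, map_mul, eval_C, map_ofNat, sub_eq_zero]
  rw [setOf_eval_esymm_eq_zeroOneVectors, ← coe_zeroOneVectors]
  refine ⟨rfl, finite_toSet _, ?_⟩
  rw [Set.ncard_coe_finset, card_zeroOneVectors, Fintype.card_fin]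

/-- The common zero set of `σ₁ - k`, `σ₂ - k(k-1)/2` and
`(4k-6)σ₃ - 4σ₄ - k(k-1)²(k-2)/2` in `ℝ^n` is exactly the set of 0/1-points with
exactly `k` coordinates equal to `1`; in particular it is finite of cardinality `n choose k`. -/
theorem three_polys_zero_set (k n : ℕ) (hk : 1 ≤ k) (hn : k ≤ n) :
    letI P₁ : MvPolynomial (Fin n) ℝ := esymm (Fin n) ℝ 1 - C (k : ℝ)
    letI P₂ : MvPolynomial (Fin n) ℝ :=
      esymm (Fin n) ℝ 2 - C ((k : ℝ) * ((k : ℝ) - 1) / 2)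
    letI P₃ : MvPolynomial (Fin n) ℝ :=
      C (4 * (k : ℝ) - 6) * esymm (Fin n) ℝ 3 - 4 * esymm (Fin n) ℝ 4
        - C ((k : ℝ) * ((k : ℝ) - 1) ^ 2 * ((k : ℝ) - 2) / 2)
    letI V : Set (Fin n → ℝ) := {x | eval x P₁ = 0 ∧ eval x P₂ = 0 ∧ eval x P₃ = 0}
    V = {x | (∀ i, x i = 0 ∨ x i = 1) ∧ {i | x i = 1}.ncard = k} ∧
      V.Finite ∧ V.ncard = n.choose k :=
  three_polys_zero_set_general k n
end

section
/- Let q ≥ 1 and let a = (a₁,…,a_q) ∈ ℝ^q be such that a_j ≤ 0 for some j. Then the set {ω ∈ ℝ^q : ‖ω‖ = 1, ω_i ≥ 0 for all i = 1,…,q, and ω₁a₁ + ⋯ + ω_q a_q ≤ 0}, equipped with the subspace topology from ℝ^q, is non-empty and contractible. -/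
/-- The intersection of the unit sphere in `ℝ^q` with the cone
`{ω : ω_i ≥ 0 for all i, ⟨ω, a⟩ ≤ 0}` is non-empty and contractible, provided `a_j ≤ 0`
for some `j`. -/
theorem sphere_cone_contractible (q : ℕ) (hq : 1 ≤ q) (a : Fin q → ℝ)
    (ha : ∃ j, a j ≤ 0) :
    letI S : Set (EuclideanSpace ℝ (Fin q)) :=
      {ω | ‖ω‖ = 1 ∧ (∀ i, 0 ≤ ω i) ∧ ∑ i, ω i * a i ≤ 0}
    S.Nonempty ∧ ContractibleSpace S := by
  set S : Set (EuclideanSpace ℝ (Fin q)) :=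
    {ω | ‖ω‖ = 1 ∧ (∀ i, 0 ≤ ω i) ∧ ∑ i, ω i * a i ≤ 0} with hS_def
  obtain ⟨j, hj⟩ := ha
  set c : EuclideanSpace ℝ (Fin q) := EuclideanSpace.single j 1 with hc_def
  have hcnorm : ‖c‖ = 1 := by simp [hc_def]
  have hci : ∀ i, 0 ≤ c i := by
    intro i
    rw [hc_def, EuclideanSpace.single_apply]
    split <;> norm_num
  have hcsum : ∑ i, c i * a i = a j := by
    simp [hc_def, EuclideanSpace.single_apply, ite_mul]
  have hcS : c ∈ S := ⟨hcnorm, hci, by rw [hcsum]; exact hj⟩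
  refine ⟨⟨c, hcS⟩, ?_⟩
  -- the straight-line map toward c, before normalization
  set f : unitInterval × S → EuclideanSpace ℝ (Fin q) :=
    fun p => (1 - (p.1 : ℝ)) • (p.2 : EuclideanSpace ℝ (Fin q)) + (p.1 : ℝ) • c with hf_def
  have hf_apply : ∀ (p : unitInterval × S) (i : Fin q),
      f p i = (1 - (p.1 : ℝ)) * (p.2 : EuclideanSpace ℝ (Fin q)) i + (p.1 : ℝ) * c i := by
    intro p i
    simp [hf_def]
  have hf_cont : Continuous f := by
    apply Continuous.add
    · exact ((continuous_const.sub (continuous_subtype_val.comp continuous_fst)).smul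
        (continuous_subtype_val.comp continuous_snd))
    · exact (continuous_subtype_val.comp continuous_fst).smul continuous_const
  have hf_coord : ∀ (p : unitInterval × S) (i : Fin q), 0 ≤ f p i := by
    rintro ⟨t, ω⟩ i
    rw [hf_apply]
    have h1 : (0:ℝ) ≤ 1 - (t:ℝ) := by linarith [t.2.2]
    have := ω.2.2.1 i
    have := hci i
    have := t.2.1
    positivity
  have hf_ne : ∀ p : unitInterval × S, f p ≠ 0 := by
    rintro ⟨t, ω⟩ h
    have hj' : f (t, ω) j = 0 := by rw [h]; rfl
    rw [hf_apply] at hj'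
    have hcj : c j = 1 := by rw [hc_def, EuclideanSpace.single_apply]; simp
    rw [hcj, mul_one] at hj'
    have h1 : (0:ℝ) ≤ 1 - (t:ℝ) := by linarith [t.2.2]
    have h2 : 0 ≤ (ω : EuclideanSpace ℝ (Fin q)) j := ω.2.2.1 j
    have ht0 : (t : ℝ) = 0 := by nlinarith [t.2.1]
    have : f (t, ω) = (ω : EuclideanSpace ℝ (Fin q)) := by
      rw [hf_def]; simp [ht0]
    rw [this] at h
    have := ω.2.1
    rw [h] at this
    simp at this
  have hf_sum : ∀ p : unitInterval × S, ∑ i, f p i * a i ≤ 0 := by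
    rintro ⟨t, ω⟩
    have : ∑ i, f (t, ω) i * a i
        = (1 - (t:ℝ)) * (∑ i, (ω : EuclideanSpace ℝ (Fin q)) i * a i) + (t:ℝ) * a j := by
      rw [Finset.mul_sum, ← hcsum, Finset.mul_sum, ← Finset.sum_add_distrib]
      refine Finset.sum_congr rfl fun i _ => ?_
      rw [hf_apply]; ring
    rw [this]
    have h1 : (0:ℝ) ≤ 1 - (t:ℝ) := by linarith [t.2.2]
    have h2 := ω.2.2.2
    have h3 := t.2.1
    nlinarith
  have hF_mem : ∀ p : unitInterval × S, ‖f p‖⁻¹ • f p ∈ S := by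
    intro p
    refine ⟨norm_smul_inv_norm (hf_ne p), fun i => ?_, ?_⟩
    · have : (‖f p‖⁻¹ • f p) i = ‖f p‖⁻¹ * f p i := by simp
      rw [this]
      have := hf_coord p i
      positivity
    · have : ∑ i, (‖f p‖⁻¹ • f p) i * a i = ‖f p‖⁻¹ * ∑ i, f p i * a i := by
        rw [Finset.mul_sum]
        refine Finset.sum_congr rfl fun i _ => ?_
        simp [mul_assoc]
      rw [this]
      have h1 : (0:ℝ) ≤ ‖f p‖⁻¹ := by positivity
      exact mul_nonpos_of_nonneg_of_nonpos h1 (hf_sum p)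
  rw [contractible_iff_id_nullhomotopic]
  refine ⟨⟨c, hcS⟩, ⟨?_⟩⟩
  refine ContinuousMap.Homotopy.mk
    ⟨fun p => ⟨‖f p‖⁻¹ • f p, hF_mem p⟩, ?_⟩ ?_ ?_
  · exact Continuous.subtype_mk (((hf_cont.norm).inv₀ fun p => by
      simpa using norm_ne_zero_iff.2 (hf_ne p)).smul hf_cont) _
  · intro ω
    have hfω : f (0, ω) = (ω : EuclideanSpace ℝ (Fin q)) := by
      rw [hf_def]; simp
    ext1
    simp only [ContinuousMap.coe_mk]
    rw [hfω, ω.2.1]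
    simp
  · intro ω
    have hfω : f (1, ω) = c := by
      rw [hf_def]; simp
    ext1
    simp only [ContinuousMap.coe_mk]
    rw [hfω, hcnorm]
    simp
end

section
/- Let d, n ∈ ℕ with d ≥ 1 and n ≥ 2^{d−1} + 1, and let P ∈ ℝ[X_1,…,X_n] be a symmetric multi-affine polynomial with deg P = d. Then every connected component of Z(P, ℝ^n) intersects the hyperplane {x ∈ ℝ^n : x_n = 0}. -/
/-!
Multi-affinity and symmetry give `P = ∑ₖ cₖ eₖ` with `cₖ = 0` for `k > d`, so splitting off the
last variable, `P(z, t) = A₀(z) + t A₁(z)` with `A₀ = ∑ cₖ eₖ` and `A₁ = ∑ cₖ₊₁ eₖ` on `ℝⁿ⁻¹`.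
If `A₁(x') = 0`, the whole vertical line through `x = (x', τ)` lies in the zero set. Otherwise the
graph of `-A₀ / A₁` over the component `C` of `x'` in `{A₁ ≠ 0}` is a connected part of the zero
set through `x`, and it meets the hyperplane as soon as `A₀` vanishes somewhere on `C`.

That `A₀` takes both signs on every component of `{A₁ ≠ 0} ⊆ ℝᵐ` when `cₖ = 0` for `k > m` is
proved by induction on `m`. Split off a variable once more: `A₀ = A₀' + t B₁`, `A₁ = B₁ + t B₂`.
If `ε A₀ ≥ 0` on a component `D`, then `B₂ ≠ 0` at the base point (else a whole vertical line lies
in `D` and forces `B₁ = 0` there), and over the component `E` of the base point in `{B₂ ≠ 0}` the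
open half-lines on which `A₁` has the sign it has at the base point all lie in `D`. Letting `t` run
to infinity along them shows that `ε B₁` has a constant sign on `E`, contradicting the induction
hypothesis for the shifted coefficients.
-/

open MvPolynomial Finset Function Filter Set

section ElementarySymmetric

variable {R : Type*} [CommSemiring R]

theorem Multiset.esymm_zero (s : Multiset R) : s.esymm 0 = 1 := by
  simp [Multiset.esymm]

theorem Multiset.esymm_cons (a : R) (s : Multiset R) (k : ℕ) :
    (a ::ₘ s).esymm (k + 1) = s.esymm (k + 1) + a * s.esymm k := by
  simp [Multiset.esymm, Multiset.powersetCard_cons, Multiset.map_map, Multiset.sum_map_mul_left]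

theorem Multiset.esymm_eq_zero_of_card_lt {s : Multiset R} {k : ℕ} (h : Multiset.card s < k) :
    s.esymm k = 0 := by
  simp [Multiset.esymm, Multiset.powersetCard_eq_empty _ h]

theorem Fin.univ_val_map_snoc {α : Type*} {n : ℕ} (y : Fin n → α) (t : α) :
    univ.val.map (Fin.snoc y t : Fin (n + 1) → α) = t ::ₘ univ.val.map y := by
  rw [Fin.univ_castSuccEmb]
  simp [Function.comp_def]

noncomputable def esymmSum {ι : Type*} [Fintype ι] (c : ℕ → R) (y : ι → R) : R :=
  ∑ k ∈ range (Fintype.card ι + 1), c k * (univ.val.map y).esymm k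

theorem esymmSum_snoc {n : ℕ} (c : ℕ → R) (y : Fin n → R) (t : R) :
    esymmSum c (Fin.snoc y t : Fin (n + 1) → R) =
      esymmSum c y + t * esymmSum (fun k => c (k + 1)) y := by
  have hs : (univ.val.map y).esymm (n + 1) = 0 := Multiset.esymm_eq_zero_of_card_lt (by simp)
  simp only [esymmSum, Fintype.card_fin, Fin.univ_val_map_snoc]
  generalize univ.val.map y = s at hs ⊢
  rw [sum_range_succ', sum_range_succ' (fun k => c k * s.esymm k), sum_range_succ _ n]
  simp only [Multiset.esymm_cons, Multiset.esymm_zero, hs, mul_add, sum_add_distrib, mul_sum,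
    sum_range_succ _ n, mul_left_comm (c _) t]
  ring

theorem continuous_esymmSum [TopologicalSpace R] [IsTopologicalSemiring R] {ι : Type*}
    [Fintype ι] (c : ℕ → R) : Continuous (esymmSum c : (ι → R) → R) := by
  unfold esymmSum
  simp only [esymm_map_val]
  fun_prop

end ElementarySymmetric

section SquarefreeCoeff

variable {σ R : Type*} [CommSemiring R]

noncomputable def squarefreeExponent (S : Finset σ) : σ →₀ ℕ := ∑ i ∈ S, Finsupp.single i 1

theorem squarefreeExponent_apply [DecidableEq σ] (S : Finset σ) (i : σ) :
    squarefreeExponent S i = if i ∈ S then 1 else 0 := by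
  simp [squarefreeExponent, Finsupp.finsetSum_apply, Finsupp.single_apply]

theorem support_squarefreeExponent (S : Finset σ) : (squarefreeExponent S).support = S := by
  classical
  ext i
  simp [squarefreeExponent_apply]

theorem squarefreeExponent_injective : Injective (squarefreeExponent (σ := σ)) := fun S T h => by
  rw [← support_squarefreeExponent S, h, support_squarefreeExponent]

theorem sum_squarefreeExponent (S : Finset σ) : ((squarefreeExponent S).sum fun _ e => e) = #S := by
  classical
  simp [Finsupp.sum, support_squarefreeExponent, squarefreeExponent_apply]

theorem mapDomain_squarefreeExponent {τ : Type*} [DecidableEq τ] {g : σ → τ} (hg : Injective g)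
    (S : Finset σ) :
    Finsupp.mapDomain g (squarefreeExponent S) = squarefreeExponent (S.image g) := by
  simp [squarefreeExponent, Finsupp.mapDomain_finsetSum, sum_image hg.injOn]

theorem eq_squarefreeExponent_support {u : σ →₀ ℕ} (hu : ∀ i, u i ≤ 1) :
    u = squarefreeExponent u.support := by
  classical
  ext i
  have := hu i
  rw [squarefreeExponent_apply]
  split_ifs with h <;> simp at h <;> omega

theorem coeff_squarefreeExponent_eq_of_card_eq {P : MvPolynomial σ R} (hP : P.IsSymmetric)
    {S T : Finset σ} (h : #S = #T) :
    coeff (squarefreeExponent S) P = coeff (squarefreeExponent T) P := by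
  classical
  obtain ⟨g, hg⟩ := (Set.powersetCard.isPretransitive (α := σ) (n := #T)).exists_smul_eq
    ⟨S, h⟩ ⟨T, rfl⟩
  have hST : S.image g = T := by simpa [smul_finset_def] using congrArg Subtype.val hg
  rw [← hST, ← mapDomain_squarefreeExponent g.injective, ← coeff_rename_mapDomain g g.injective,
    hP g]

open scoped Classical in
noncomputable def squarefreeCoeff (P : MvPolynomial σ R) (k : ℕ) : R :=
  if h : ∃ S : Finset σ, #S = k then coeff (squarefreeExponent h.choose) P else 0

theorem coeff_squarefreeExponent {P : MvPolynomial σ R} (hP : P.IsSymmetric) (S : Finset σ) :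
    coeff (squarefreeExponent S) P = squarefreeCoeff P #S := by
  have h : ∃ T : Finset σ, #T = #S := ⟨S, rfl⟩
  rw [squarefreeCoeff, dif_pos h]
  exact coeff_squarefreeExponent_eq_of_card_eq hP h.choose_spec.symm

theorem squarefreeCoeff_eq_zero_of_totalDegree_lt {P : MvPolynomial σ R} {k : ℕ}
    (hk : P.totalDegree < k) : squarefreeCoeff P k = 0 := by
  rw [squarefreeCoeff]
  split_ifs with h
  · by_contra hne
    have := le_totalDegree (mem_support_iff.2 hne)
    rw [sum_squarefreeExponent, h.choose_spec] at this
    omega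
  · rfl

theorem eval_eq_esymmSum [Fintype σ] {P : MvPolynomial σ R} (hma : ∀ i, P.degreeOf i ≤ 1)
    (hP : P.IsSymmetric) (y : σ → R) : eval y P = esymmSum (squarefreeCoeff P) y := by
  classical
  have hsupp : P.support ⊆ univ.powerset.image squarefreeExponent := fun u hu =>
    mem_image.2 ⟨u.support, mem_powerset.2 (subset_univ _),
      (eq_squarefreeExponent_support fun i => degreeOf_le_iff.1 (hma i) u hu).symm⟩
  have hprod (S : Finset σ) : ∏ i, y i ^ squarefreeExponent S i = ∏ i ∈ S, y i := by
    simp [squarefreeExponent_apply, pow_ite, prod_ite_mem]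
  calc eval y P = ∑ u ∈ univ.powerset.image squarefreeExponent, coeff u P * ∏ i, y i ^ u i := by
        rw [eval_eq']
        refine sum_subset hsupp fun u _ hu => ?_
        rw [notMem_support_iff.1 hu, zero_mul]
    _ = ∑ S ∈ univ.powerset, squarefreeCoeff P #S * ∏ i ∈ S, y i := by
        rw [sum_image squarefreeExponent_injective.injOn]
        simp only [coeff_squarefreeExponent hP, hprod]
    _ = esymmSum (squarefreeCoeff P) y := by
        rw [sum_powerset, esymmSum, card_univ]
        refine sum_congr rfl fun k _ => ?_
        rw [esymm_map_val, mul_sum]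
        exact sum_congr rfl fun S hS => by rw [(mem_powersetCard.1 hS).2]

end SquarefreeCoeff

section AffineFunctions

variable {𝕜 : Type*} [Field 𝕜] [LinearOrder 𝕜] [IsStrictOrderedRing 𝕜]

theorem mul_nonneg_of_forall_add_mul_pos_imp {a b p q : 𝕜} (hq : q ≠ 0)
    (h : ∀ t, 0 < p + t * q → 0 ≤ a + t * b) : 0 ≤ b * q := by
  by_contra! hbq
  have hp : Tendsto (fun s => p + s * (q * q)) atTop atTop :=
    tendsto_atTop_add_const_left _ p (tendsto_id.atTop_mul_const (mul_self_pos.2 hq))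
  have ha : Tendsto (fun s => a + s * (b * q)) atTop atBot :=
    tendsto_atBot_add_const_left _ a (tendsto_id.atTop_mul_const_of_neg hbq)
  obtain ⟨s, hps, has⟩ := ((hp.eventually_gt_atTop 0).and (ha.eventually_lt_atBot 0)).exists
  have := h (s * q) (by linarith [mul_assoc s q q])
  linarith [mul_assoc s q b, mul_comm q b]

theorem eq_zero_of_forall_nonneg_add_mul {a b : 𝕜} (h : ∀ t, 0 ≤ a + t * b) : b = 0 := by
  have h₁ := mul_nonneg_of_forall_add_mul_pos_imp (p := 0) one_ne_zero fun t _ => h t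
  have h₂ :=
    mul_nonneg_of_forall_add_mul_pos_imp (p := 0) (neg_ne_zero.2 one_ne_zero) fun t _ => h t
  linarith

end AffineFunctions

theorem IsPreconnected.mul_pos_of_ne_zero {X : Type*} [TopologicalSpace X] {s : Set X}
    (hs : IsPreconnected s) {f : X → ℝ} (hf : ContinuousOn f s) (hne : ∀ x ∈ s, f x ≠ 0)
    {a b : X} (ha : a ∈ s) (hb : b ∈ s) : 0 < f a * f b := by
  by_contra! h
  obtain ⟨z, hz, hz0⟩ : ∃ z ∈ s, f z = 0 := by
    rcases mul_nonpos_iff.1 h with ⟨ha₀, hb₀⟩ | ⟨ha₀, hb₀⟩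
    · exact hs.intermediate_value hb ha hf ⟨hb₀, ha₀⟩
    · exact hs.intermediate_value ha hb hf ⟨ha₀, hb₀⟩
  exact hne z hz hz0

section AffineInLastCoordinate

variable {n : ℕ}

theorem snoc_mem_connectedComponentIn_of_forall {X : Type*} [TopologicalSpace X]
    [PreconnectedSpace X] {s : Set (Fin (n + 1) → X)} {z : Fin n → X}
    (h : ∀ u, (Fin.snoc z u : Fin (n + 1) → X) ∈ s) (τ t : X) :
    (Fin.snoc z t : Fin (n + 1) → X) ∈ connectedComponentIn s (Fin.snoc z τ) :=
  (isPreconnected_range (by fun_prop : Continuous fun u : X => (Fin.snoc z u : Fin (n + 1) → X))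
    ).subset_connectedComponentIn ⟨τ, rfl⟩ (range_subset_iff.2 h) ⟨t, rfl⟩

variable {F : (Fin (n + 1) → ℝ) → ℝ} {f g : (Fin n → ℝ) → ℝ}

theorem snoc_mem_connectedComponentIn_of_mul_pos
    (hF : ∀ z t, F (Fin.snoc z t) = f z + t * g z) (hf : Continuous f) (hg : Continuous g)
    {E : Set (Fin n → ℝ)} (hE : IsPreconnected E) (hgE : ∀ z ∈ E, g z ≠ 0)
    {x z : Fin n → ℝ} (hx : x ∈ E) (hz : z ∈ E) {τ t : ℝ}
    (h : 0 < F (Fin.snoc z t) * F (Fin.snoc x τ)) :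
    Fin.snoc z t ∈ connectedComponentIn {y | F y ≠ 0} (Fin.snoc x τ) := by
  generalize ha_def : F (Fin.snoc x τ) = a at h
  have ha : a ≠ 0 := right_ne_zero_of_mul h.ne'
  -- `Φ (w, s)` is the point above `w` at which `F` takes the value `s * a`
  let Φ : (Fin n → ℝ) × ℝ → (Fin (n + 1) → ℝ) := fun p => Fin.snoc p.1 ((p.2 * a - f p.1) / g p.1)
  have hΦ : ∀ w ∈ E, ∀ u, Φ (w, F (Fin.snoc w u) / a) = Fin.snoc w u := by
    intro w hw u
    simp only [Φ, hF]
    congr 1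
    field_simp [hgE w hw]
    ring
  have hpre : IsPreconnected (Φ '' E ×ˢ Set.Ioi (0 : ℝ)) :=
    (hE.prod isPreconnected_Ioi).image Φ (by fun_prop (disch := exact fun p hp => hgE _ hp.1))
  refine hpre.subset_connectedComponentIn ⟨(x, 1), ⟨hx, mem_Ioi.2 one_pos⟩, ?_⟩ ?_
    ⟨(z, F (Fin.snoc z t) / a), ⟨hz, div_pos_iff.2 (mul_pos_iff.1 h)⟩, hΦ z hz t⟩
  · rw [← hΦ x hx τ, ha_def, div_self ha]
  · rintro _ ⟨⟨w, s⟩, ⟨hw, hs⟩, rfl⟩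
    simp only [mem_ofPred_eq, Φ, hF]
    field_simp [hgE w hw]
    rw [add_sub_cancel]
    exact mul_ne_zero (mem_Ioi.1 hs).ne' ha

theorem exists_last_eq_zero_mem_connectedComponentIn
    (hF : ∀ z t, F (Fin.snoc z t) = f z + t * g z) (hf : Continuous f) (hg : Continuous g)
    {x : Fin n → ℝ} {τ : ℝ} (hx : F (Fin.snoc x τ) = 0)
    (hzero : g x ≠ 0 → ∃ z ∈ connectedComponentIn {w | g w ≠ 0} x, f z = 0) :
    ∃ y ∈ connectedComponentIn {y | F y = 0} (Fin.snoc x τ), y (Fin.last n) = 0 := by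
  by_cases hgx : g x = 0
  · have hfx : f x = 0 := by simpa [hF, hgx] using hx
    exact ⟨Fin.snoc x 0,
      snoc_mem_connectedComponentIn_of_forall (fun u => by simp [hF, hfx, hgx]) τ 0, by simp⟩
  obtain ⟨z, hz, hfz⟩ := hzero hgx
  set C := connectedComponentIn {w | g w ≠ 0} x
  have hgC : ∀ w ∈ C, g w ≠ 0 := fun w hw => connectedComponentIn_subset _ _ hw
  let Ψ : (Fin n → ℝ) → (Fin (n + 1) → ℝ) := fun w => Fin.snoc w (-f w / g w)
  have hpre : IsPreconnected (Ψ '' C) :=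
    isPreconnected_connectedComponentIn.image Ψ (by fun_prop (disch := exact hgC))
  have hΨx : Ψ x = Fin.snoc x τ := by
    rw [hF] at hx
    simp only [Ψ]
    congr 1
    field_simp
    linarith
  refine ⟨Ψ z, hpre.subset_connectedComponentIn ⟨x, mem_connectedComponentIn hgx, hΨx⟩ ?_
    ⟨z, hz, rfl⟩, by simp [Ψ, hfz]⟩
  rintro _ ⟨w, hw, rfl⟩
  simp only [mem_ofPred_eq, Ψ, hF]
  field_simp [hgC w hw]
  ring

end AffineInLastCoordinate

theorem exists_mul_esymmSum_neg_mem_connectedComponentIn {n : ℕ} {c : ℕ → ℝ}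
    (hc : ∀ k, n < k → c k = 0) {x : Fin n → ℝ} (hx : esymmSum (fun k => c (k + 1)) x ≠ 0)
    {ε : ℝ} (hε : ε ≠ 0) :
    ∃ y ∈ connectedComponentIn {z | esymmSum (fun k => c (k + 1)) z ≠ 0} x,
      ε * esymmSum c y < 0 := by
  induction n generalizing c ε with
  | zero =>
    simp [esymmSum, Multiset.esymm_zero, hc 1 one_pos] at hx
  | succ n ih =>
    obtain ⟨x, τ, rfl⟩ : ∃ x' τ, x = Fin.snoc x' τ :=
      ⟨Fin.init x, x (Fin.last n), (Fin.snoc_init_self x).symm⟩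
    generalize hc₁ : (fun k => c (k + 1)) = c₁ at hx ⊢
    have hF₀ : ∀ z t, esymmSum c (Fin.snoc z t : Fin (n + 1) → ℝ) =
        esymmSum c z + t * esymmSum c₁ z := hc₁ ▸ esymmSum_snoc c
    have hF₁ := esymmSum_snoc (n := n) c₁
    generalize hc₂ : (fun k => c₁ (k + 1)) = c₂ at hF₁
    generalize ha : esymmSum c₁ (Fin.snoc x τ : Fin (n + 1) → ℝ) = a at hx
    by_contra! H
    have hB₂ : esymmSum c₂ x ≠ 0 := by
      intro h₂
      have hline : ∀ t, (Fin.snoc x t : Fin (n + 1) → ℝ) ∈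
          connectedComponentIn {z | esymmSum c₁ z ≠ 0} (Fin.snoc x τ) :=
        snoc_mem_connectedComponentIn_of_forall (fun u => by
          rw [mem_ofPred_eq, hF₁, h₂, mul_zero, add_zero]
          rwa [← ha, hF₁, h₂, mul_zero, add_zero] at hx) τ
      have h₁ : ε * esymmSum c₁ x = 0 :=
        eq_zero_of_forall_nonneg_add_mul (a := ε * esymmSum c x) fun t => by
          have := H _ (hline t)
          rw [hF₀] at this
          linarith
      apply hx
      rw [← ha, hF₁, h₂, mul_zero, add_zero]
      exact (mul_eq_zero.1 h₁).resolve_left hε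
    have hE : ∀ z ∈ connectedComponentIn {z | esymmSum c₂ z ≠ 0} x, esymmSum c₂ z ≠ 0 :=
      fun z hz => connectedComponentIn_subset _ _ hz
    have hxE : x ∈ connectedComponentIn {z | esymmSum c₂ z ≠ 0} x := mem_connectedComponentIn hB₂
    obtain ⟨z, hz, hneg⟩ := ih (c := c₁) (fun k hk => hc₁ ▸ hc (k + 1) (by omega)) (hc₂ ▸ hB₂)
      (mul_ne_zero hε (mul_ne_zero hB₂ hx))
    rw [hc₂] at hz
    have hsign : 0 < esymmSum c₂ z * esymmSum c₂ x :=
      isPreconnected_connectedComponentIn.mul_pos_of_ne_zero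
        (continuous_esymmSum _).continuousOn hE hz hxE
    have hhalf : 0 ≤ ε * esymmSum c₁ z * (esymmSum c₂ z * a) :=
      mul_nonneg_of_forall_add_mul_pos_imp (p := esymmSum c₁ z * a) (a := ε * esymmSum c z)
        (mul_ne_zero (hE z hz) hx) fun t ht => by
          have := H _ (snoc_mem_connectedComponentIn_of_mul_pos hF₁ (continuous_esymmSum _)
            (continuous_esymmSum _) isPreconnected_connectedComponentIn hE hxE hz
            (by rw [hF₁, ha]; linarith))
          rw [hF₀] at this
          linarith
    -- `hneg` and `hhalf` give `ε * esymmSum c₁ z` opposite signs, as `esymmSum c₂` keeps its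
    -- sign on the component of `x`
    nlinarith [mul_neg_of_neg_of_pos hneg hsign, mul_nonneg hhalf (sq_nonneg (esymmSum c₂ x))]

theorem exists_esymmSum_eq_zero_mem_connectedComponentIn {n : ℕ} {c : ℕ → ℝ}
    (hc : ∀ k, n < k → c k = 0) {x : Fin n → ℝ} (hx : esymmSum (fun k => c (k + 1)) x ≠ 0) :
    ∃ y ∈ connectedComponentIn {z | esymmSum (fun k => c (k + 1)) z ≠ 0} x, esymmSum c y = 0 := by
  obtain ⟨y₁, hy₁, h₁⟩ := exists_mul_esymmSum_neg_mem_connectedComponentIn hc hx one_ne_zero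
  obtain ⟨y₂, hy₂, h₂⟩ :=
    exists_mul_esymmSum_neg_mem_connectedComponentIn hc hx (neg_ne_zero.2 one_ne_zero)
  exact isPreconnected_connectedComponentIn.intermediate_value hy₁ hy₂
    (continuous_esymmSum c).continuousOn ⟨by linarith, by linarith⟩

theorem components_meet_hyperplane_general (d n : ℕ) (hn : 2 ^ (d - 1) + 1 ≤ n)
    (P : MvPolynomial (Fin n) ℝ)
    (hma : ∀ i : Fin n, P.degreeOf i ≤ 1)
    (hsym : P.IsSymmetric)
    (hdeg : P.totalDegree = d) :
    ∀ x ∈ {y : Fin n → ℝ | eval y P = 0},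
      ∃ y ∈ connectedComponentIn {y : Fin n → ℝ | eval y P = 0} x,
        y ⟨n - 1, Nat.sub_lt (Nat.lt_of_lt_of_le (Nat.succ_pos _) hn) Nat.one_pos⟩ = 0 := by
  intro x hx
  obtain ⟨m, rfl⟩ := Nat.exists_eq_add_one.2 (le_of_add_le_right hn)
  have hdm : d ≤ m := by
    have := Nat.lt_two_pow_self (n := d - 1)
    omega
  have hc : ∀ k, m < k → squarefreeCoeff P k = 0 := fun k hk =>
    squarefreeCoeff_eq_zero_of_totalDegree_lt (by omega)
  have hF : ∀ z t, eval (Fin.snoc z t) P = esymmSum (squarefreeCoeff P) z +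
      t * esymmSum (fun k => squarefreeCoeff P (k + 1)) z := fun z t => by
    rw [eval_eq_esymmSum hma hsym, esymmSum_snoc]
  obtain ⟨x, τ, rfl⟩ : ∃ x' τ, x = Fin.snoc x' τ :=
    ⟨Fin.init x, x (Fin.last m), (Fin.snoc_init_self x).symm⟩
  obtain ⟨y, hy, hy₀⟩ := exists_last_eq_zero_mem_connectedComponentIn (F := fun y => eval y P) hF
    (continuous_esymmSum _) (continuous_esymmSum _) hx
    (exists_esymmSum_eq_zero_mem_connectedComponentIn hc)
  exact ⟨y, hy, hy₀⟩

/-- For `d ≥ 1` and `n ≥ 2^(d-1) + 1`, every connected component of the zero set of a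
symmetric multi-affine polynomial of degree `d` in `n` variables intersects the
hyperplane `{x : x_n = 0}`. -/
theorem components_meet_hyperplane (d n : ℕ) (hd : 1 ≤ d) (hn : 2 ^ (d - 1) + 1 ≤ n)
    (P : MvPolynomial (Fin n) ℝ)
    (hma : ∀ i : Fin n, P.degreeOf i ≤ 1)
    (hsym : P.IsSymmetric)
    (hdeg : P.totalDegree = d) :
    ∀ x ∈ {y : Fin n → ℝ | eval y P = 0},
      ∃ y ∈ connectedComponentIn {y : Fin n → ℝ | eval y P = 0} x,
        y ⟨n - 1, Nat.sub_lt (Nat.lt_of_lt_of_le (Nat.succ_pos _) hn) Nat.one_pos⟩ = 0 :=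
  components_meet_hyperplane_general d n hn P hma hsym hdeg
end

section
/- Let n ≥ 3 and let x = (x₁,…,x_n) ∈ ℝ^n satisfy x₁ + ⋯ + x_n = 0. Then (x₁³ + ⋯ + x_n³)² ≤ ((n−2)²/(n(n−1)))·(x₁² + ⋯ + x_n²)³. -/
/-!
Write `N` for the dimension and `s = ∑ xᵢ²`. Since `∑ xᵢ = 0`, `N ∑ xᵢ³ = ∑ xᵢ (N xᵢ² - s)`, so
Cauchy–Schwarz gives `N (∑ xᵢ³)² ≤ s (N ∑ xᵢ⁴ - s²)`. It remains to bound the fourth power sum: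
`N (N - 1) ∑ xᵢ⁴ ≤ (N² - 3N + 3) s²`. The difference of the two sides, times `(N - 1)(N - 2)`, is
the sum of squares `∑_{i ≠ j} R(i, j)²` of a quadratic form `R` which vanishes on the extremal
vector `(N - 1, -1, …, -1)`.
-/

open Finset

section PowerSums

variable {ι : Type*} [Fintype ι]

/-- With `a = (N - 1)(N - 2)` and `b = N - 1`, where `N = card ι`, this form vanishes at every
off-diagonal pair `(i, j)` of the extremal vector `(N - 1, -1, …, -1)`. -/
noncomputable def pairForm (a b : ℝ) (x : ι → ℝ) (i j : ι) : ℝ :=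
  a * x i * x j + b * (x i ^ 2 + x j ^ 2) - ∑ k, x k ^ 2

theorem sum_sum_pairForm_sq (a b : ℝ) {x : ι → ℝ} (hx : ∑ i, x i = 0) :
    ∑ i, ∑ j, pairForm a b x i j ^ 2 =
      (a ^ 2 + 2 * b ^ 2 + (Fintype.card ι : ℝ) ^ 2 - 4 * b * Fintype.card ι)
          * (∑ i, x i ^ 2) ^ 2
        + 2 * b ^ 2 * Fintype.card ι * ∑ i, x i ^ 4 := by
  set s := ∑ k, x k ^ 2 with hs
  have expand : ∀ i j, pairForm a b x i j ^ 2 =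
      (a ^ 2 + 2 * b ^ 2) * x i ^ 2 * x j ^ 2 + b ^ 2 * x i ^ 4 + b ^ 2 * x j ^ 4 + s ^ 2
        + 2 * a * b * x i ^ 3 * x j + 2 * a * b * x i * x j ^ 3 - 2 * a * s * x i * x j
        - 2 * b * s * x i ^ 2 - 2 * b * s * x j ^ 2 := fun i j => by
    rw [pairForm]; ring
  simp only [expand, sum_add_distrib, sum_sub_distrib, ← mul_sum, ← sum_mul, sum_const,
    card_univ, nsmul_eq_mul, hx, ← hs]
  ring

theorem sum_pairForm_diag_sq (a b : ℝ) (x : ι → ℝ) :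
    ∑ i, pairForm a b x i i ^ 2 =
      (a + 2 * b) ^ 2 * ∑ i, x i ^ 4 - 2 * (a + 2 * b) * (∑ i, x i ^ 2) ^ 2
        + Fintype.card ι * (∑ i, x i ^ 2) ^ 2 := by
  set s := ∑ k, x k ^ 2 with hs
  have expand : ∀ i, pairForm a b x i i ^ 2 =
      (a + 2 * b) ^ 2 * x i ^ 4 - 2 * (a + 2 * b) * s * x i ^ 2 + s ^ 2 := fun i => by
    rw [pairForm]; ring
  simp only [expand, sum_add_distrib, sum_sub_distrib, ← mul_sum, sum_const, card_univ,
    nsmul_eq_mul, ← hs]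
  ring

theorem sum_diag_le_sum_sum_of_nonneg {f : ι → ι → ℝ} (hf : ∀ i j, 0 ≤ f i j) :
    ∑ i, f i i ≤ ∑ i, ∑ j, f i j :=
  sum_le_sum fun i _ => single_le_sum (fun j _ => hf i j) (mem_univ i)

theorem card_mul_card_sub_one_mul_sum_pow_four_le (hN : 3 ≤ Fintype.card ι) {x : ι → ℝ}
    (hx : ∑ i, x i = 0) :
    (Fintype.card ι : ℝ) * (Fintype.card ι - 1) * ∑ i, x i ^ 4
      ≤ ((Fintype.card ι : ℝ) ^ 2 - 3 * Fintype.card ι + 3) * (∑ i, x i ^ 2) ^ 2 := by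
  have hN : (3 : ℝ) ≤ Fintype.card ι := by exact_mod_cast hN
  set N : ℝ := (Fintype.card ι : ℝ)
  have key := sum_diag_le_sum_sum_of_nonneg fun i j =>
    sq_nonneg (pairForm ((N - 1) * (N - 2)) (N - 1) x i j)
  rw [sum_sum_pairForm_sq _ _ hx, sum_pairForm_diag_sq] at key
  nlinarith [mul_pos (by linarith : 0 < N - 1) (by linarith : 0 < N - 2)]

theorem sq_card_mul_sum_pow_three_le {x : ι → ℝ} (hx : ∑ i, x i = 0) :
    ((Fintype.card ι : ℝ) * ∑ i, x i ^ 3) ^ 2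
      ≤ Fintype.card ι * (∑ i, x i ^ 2)
          * (Fintype.card ι * ∑ i, x i ^ 4 - (∑ i, x i ^ 2) ^ 2) := by
  set N : ℝ := (Fintype.card ι : ℝ)
  set s := ∑ k, x k ^ 2 with hs
  have cs := sum_mul_sq_le_sq_mul_sq univ x fun i => N * x i ^ 2 - s
  have h3 : ∑ i, x i * (N * x i ^ 2 - s) = N * ∑ i, x i ^ 3 := by
    have expand : ∀ i, x i * (N * x i ^ 2 - s) = N * x i ^ 3 - s * x i := fun i => by ring
    simp only [expand, sum_sub_distrib, ← mul_sum, hx, mul_zero, sub_zero]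
  have h4 : ∑ i, (N * x i ^ 2 - s) ^ 2 = N * (N * ∑ i, x i ^ 4 - s ^ 2) := by
    have expand : ∀ i, (N * x i ^ 2 - s) ^ 2 = N ^ 2 * x i ^ 4 - 2 * N * s * x i ^ 2 + s ^ 2 :=
      fun i => by ring
    simp only [expand, sum_add_distrib, sum_sub_distrib, ← mul_sum, sum_const, card_univ,
      nsmul_eq_mul, ← hs]
    ring
  rw [h3, h4] at cs
  linarith

theorem card_mul_card_sub_one_mul_sq_sum_pow_three_le (hN : 3 ≤ Fintype.card ι) {x : ι → ℝ}
    (hx : ∑ i, x i = 0) :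
    (Fintype.card ι : ℝ) * (Fintype.card ι - 1) * (∑ i, x i ^ 3) ^ 2
      ≤ ((Fintype.card ι : ℝ) - 2) ^ 2 * (∑ i, x i ^ 2) ^ 3 := by
  have quartic := card_mul_card_sub_one_mul_sum_pow_four_le hN hx
  have cs := sq_card_mul_sum_pow_three_le hx
  have hN : (3 : ℝ) ≤ Fintype.card ι := by exact_mod_cast hN
  set N : ℝ := (Fintype.card ι : ℝ)
  set s := ∑ k, x k ^ 2
  have hs : 0 ≤ s := sum_nonneg fun i _ => sq_nonneg (x i)
  have hcs : N * (∑ i, x i ^ 3) ^ 2 ≤ s * (N * ∑ i, x i ^ 4 - s ^ 2) := by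
    nlinarith
  calc N * (N - 1) * (∑ i, x i ^ 3) ^ 2
      ≤ (N - 1) * (s * (N * ∑ i, x i ^ 4 - s ^ 2)) := by nlinarith
    _ = s * (N * (N - 1) * ∑ i, x i ^ 4 - (N - 1) * s ^ 2) := by ring
    _ ≤ s * ((N ^ 2 - 3 * N + 3) * s ^ 2 - (N - 1) * s ^ 2) := by gcongr
    _ = (N - 2) ^ 2 * s ^ 3 := by ring

end PowerSums

/-- If `x₁ + ⋯ + x_n = 0` with `n ≥ 3`, then
`(x₁³ + ⋯ + x_n³)² ≤ ((n-2)²/(n(n-1))) (x₁² + ⋯ + x_n²)³`. -/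
theorem power_sum_inequality (n : ℕ) (hn : 3 ≤ n) (x : Fin n → ℝ)
    (hx : ∑ i, x i = 0) :
    (∑ i, x i ^ 3) ^ 2
      ≤ ((n : ℝ) - 2) ^ 2 / ((n : ℝ) * ((n : ℝ) - 1)) * (∑ i, x i ^ 2) ^ 3 := by
  have key := card_mul_card_sub_one_mul_sq_sum_pow_three_le (by simpa using hn) hx
  rw [Fintype.card_fin] at key
  have hn : (3 : ℝ) ≤ n := by exact_mod_cast hn
  rw [div_mul_eq_mul_div, le_div_iff₀ (by nlinarith)]
  linarith
end

section
/- Let n ≥ 3 and let x ∈ ℝ^n satisfy x₁ + ⋯ + x_n = 0. Then 4·((n−2)/2·(x₁² + ⋯ + x_n²) + n)³ − 3·binom(n,3)·(x₁³ + ⋯ + x_n³)² > 0. Equivalently, the cubic polynomial g_x(t) = binom(n,3)·t³ − ((n−2)/2·N₂(x) + n)·t + N₃(x)/3 ∈ ℝ[t] has positive discriminant, and hence three distinct real roots. -/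
/-!
For centred `y ∈ ℝⁿ` one has the sharp bound `n (n - 1) N₃(y)² ≤ (n - 2)² N₂(y)³`: Cauchy–Schwarz
bounds every coordinate by `M = (n - 1) m`, where `n (n - 1) m² = N₂(y)`, and on `(-∞, M]` the cube
lies below the cubic touching it at `-m` and meeting it at `M`; summing gives
`N₃(y) ≤ (n - 2) m N₂(y)`. Since `6 C(n, 3) = n (n - 1) (n - 2)`, this turns `3 C(n, 3) N₃²` into at
most `4 ((n - 2) N₂ / 2)³ < 4 ((n - 2) N₂ / 2 + n)³`. A depressed cubic with positive discriminant
changes sign at its two critical points and at `±∞`, so it has three real roots.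
-/
open Finset Filter

theorem Nat.cast_choose_three {K : Type*} [Field K] [CharZero K] (n : ℕ) :
    (n.choose 3 : K) = n * (n - 1) * (n - 2) / 6 := by
  induction n with
  | zero => simp
  | succ n ih => rw [Nat.choose_succ_succ', Nat.cast_add, ih, Nat.cast_choose_two]; push_cast; ring

section PowerSums

variable {ι : Type*} [Fintype ι] {y : ι → ℝ}

theorem card_mul_sq_le_of_sum_eq_zero (hy : ∑ i, y i = 0) (i : ι) :
    Fintype.card ι * y i ^ 2 ≤ (Fintype.card ι - 1) * ∑ j, y j ^ 2 := by
  classical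
  have hrest : ∑ j ∈ univ.erase i, y j = -y i := by
    linarith [add_sum_erase univ y (mem_univ i)]
  have hrest_sq : ∑ j ∈ univ.erase i, y j ^ 2 = ∑ j, y j ^ 2 - y i ^ 2 := by
    linarith [add_sum_erase univ (y · ^ 2) (mem_univ i)]
  have hcard : ((univ.erase i).card : ℝ) = Fintype.card ι - 1 := by
    rw [card_erase_of_mem (mem_univ i), card_univ, Nat.cast_pred (Fintype.card_pos_iff.2 ⟨i⟩)]
  have hCS := sq_sum_le_card_mul_sum_sq (s := univ.erase i) (f := y)
  rw [hrest, hrest_sq, hcard] at hCS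
  linarith

theorem sum_cube_le_of_sum_eq_zero (hy : ∑ i, y i = 0) {m : ℝ} (hm : 0 ≤ m)
    (hS : Fintype.card ι * (Fintype.card ι - 1) * m ^ 2 = ∑ i, y i ^ 2) :
    ∑ i, y i ^ 3 ≤ (Fintype.card ι - 2) * m * ∑ i, y i ^ 2 := by
  set n : ℝ := (Fintype.card ι : ℝ)
  set M := (n - 1) * m
  have hle : ∀ i, y i ≤ M := fun i ↦ by
    have hn : (1 : ℝ) ≤ n := Nat.one_le_cast.2 (Fintype.card_pos_iff.2 ⟨i⟩)
    have hM : 0 ≤ M := mul_nonneg (by linarith) hm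
    have hsq : y i ^ 2 ≤ M ^ 2 := by
      have := card_mul_sq_le_of_sum_eq_zero hy i
      rw [← hS] at this
      nlinarith
    exact (abs_le_of_sq_le_sq' hsq hM).2
  -- `(t + m)² (t - M) ≤ 0` for `t ≤ M`; equality at `y = (M, -m, …, -m)`
  have hcube : ∀ i, y i ^ 3 ≤ (M - 2 * m) * y i ^ 2 + (2 * m * M - m ^ 2) * y i + m ^ 2 * M :=
    fun i ↦ by nlinarith [mul_nonneg (sq_nonneg (y i + m)) (sub_nonneg.2 (hle i))]
  calc ∑ i, y i ^ 3
      ≤ ∑ i, ((M - 2 * m) * y i ^ 2 + (2 * m * M - m ^ 2) * y i + m ^ 2 * M) :=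
        sum_le_sum fun i _ ↦ hcube i
    _ = (M - 2 * m) * ∑ i, y i ^ 2 + n * (m ^ 2 * M) := by
        simp only [sum_add_distrib, ← mul_sum, hy, sum_const, card_univ, nsmul_eq_mul]; ring
    _ = (n - 2) * m * ∑ i, y i ^ 2 := by rw [← hS]; ring

theorem card_mul_sq_sum_cube_le_of_sum_eq_zero (hn : 2 ≤ Fintype.card ι) (hy : ∑ i, y i = 0) :
    Fintype.card ι * (Fintype.card ι - 1) * (∑ i, y i ^ 3) ^ 2
      ≤ (Fintype.card ι - 2) ^ 2 * (∑ i, y i ^ 2) ^ 3 := by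
  have hn' : (2 : ℝ) ≤ Fintype.card ι := by exact_mod_cast hn
  set n : ℝ := (Fintype.card ι : ℝ)
  set S := ∑ i, y i ^ 2
  have hnn : 0 < n * (n - 1) := by nlinarith
  set m := √(S / (n * (n - 1)))
  have hS : n * (n - 1) * m ^ 2 = S := by
    rw [Real.sq_sqrt (div_nonneg (sum_nonneg fun i _ ↦ sq_nonneg _) hnn.le)]
    exact mul_div_cancel₀ S hnn.ne'
  have hupper := sum_cube_le_of_sum_eq_zero hy (Real.sqrt_nonneg _) hS
  have hlower := sum_cube_le_of_sum_eq_zero (y := (-y ·)) (by simp [hy]) (Real.sqrt_nonneg _)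
    (by simpa using hS)
  simp only [neg_pow_two, Odd.neg_pow (by decide : Odd 3), sum_neg_distrib] at hlower
  have hsq := sq_le_sq' (by linarith) hupper
  calc n * (n - 1) * (∑ i, y i ^ 3) ^ 2 ≤ n * (n - 1) * ((n - 2) * m * S) ^ 2 := by gcongr
    _ = (n - 2) ^ 2 * S ^ 3 := by rw [← hS]; ring

end PowerSums

theorem tendsto_cubic_atTop {a : ℝ} (ha : 0 < a) (p q : ℝ) :
    Tendsto (fun t ↦ a * t ^ 3 - p * t + q) atTop atTop := by
  have : Tendsto (fun t : ℝ ↦ t * (a * t ^ 2 - p)) atTop atTop :=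
    tendsto_id.atTop_mul_atTop₀ <| tendsto_atTop_add_const_right _ _ <|
      (tendsto_pow_atTop two_ne_zero).const_mul_atTop ha
  exact tendsto_atTop_add_const_right _ q (this.congr fun t ↦ by ring)

theorem exists_three_roots_of_depressed_cubic {a p q : ℝ} (ha : 0 < a)
    (hdisc : 27 * a * q ^ 2 < 4 * p ^ 3) :
    ∃ t₁ t₂ t₃ : ℝ, t₁ < t₂ ∧ t₂ < t₃ ∧
      ∀ t ∈ ({t₁, t₂, t₃} : Set ℝ), a * t ^ 3 - p * t + q = 0 := by
  set f : ℝ → ℝ := fun t ↦ a * t ^ 3 - p * t + q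
  have hf : Continuous f := by fun_prop
  have hp : 0 < p := by nlinarith [sq_nonneg p, mul_nonneg ha.le (sq_nonneg q)]
  -- `f` has its local maximum at `-r` and its local minimum at `r`
  set r := √(p / (3 * a))
  have hr : r ^ 2 = p / (3 * a) := Real.sq_sqrt (by positivity)
  have hq : |q| < 2 * p / 3 * r := by
    refine abs_lt_of_sq_lt_sq ?_ (by positivity)
    have : (2 * p / 3 * r) ^ 2 = 4 * p ^ 3 / (27 * a) := by rw [mul_pow, hr]; field_simp; ring
    rw [this, lt_div_iff₀ (by positivity)]
    linarith
  have har : a * r ^ 3 = p / 3 * r := by rw [pow_succ, hr]; field_simp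
  have hfr : f r < 0 := by simp only [f]; linarith [le_abs_self q]
  have hfnegr : 0 < f (-r) := by simp only [f]; linarith [neg_abs_le q]
  obtain ⟨K, hfK, hK⟩ :=
    ((tendsto_cubic_atTop ha p q).eventually_gt_atTop 0 |>.and (eventually_gt_atTop r)).exists
  obtain ⟨L, hfL, hL⟩ :=
    ((tendsto_cubic_atTop ha p (-q)).eventually_gt_atTop 0 |>.and (eventually_gt_atTop r)).exists
  have hfnegL : f (-L) < 0 := by simp only [f]; linarith
  obtain ⟨t₁, ⟨-, ht₁⟩, hf₁⟩ :=
    intermediate_value_Ioo (by linarith : -L ≤ -r) hf.continuousOn ⟨hfnegL, hfnegr⟩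
  obtain ⟨t₂, ⟨ht₂, ht₂'⟩, hf₂⟩ :=
    intermediate_value_Ioo' (neg_le_self (Real.sqrt_nonneg _)) hf.continuousOn ⟨hfr, hfnegr⟩
  obtain ⟨t₃, ⟨ht₃, -⟩, hf₃⟩ :=
    intermediate_value_Ioo hK.le hf.continuousOn ⟨hfr, hfK⟩
  refine ⟨t₁, t₂, t₃, by linarith, by linarith, ?_⟩
  rintro t (rfl | rfl | rfl)
  exacts [hf₁, hf₂, hf₃]

/-- If `x₁ + ⋯ + x_n = 0` with `n ≥ 3`, then
`4 ((n-2)/2 · N₂(x) + n)³ - 3 (n choose 3) N₃(x)² > 0`; equivalently, the cubic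
`g_x(t) = (n choose 3) t³ - ((n-2)/2 · N₂(x) + n) t + N₃(x)/3` has positive discriminant
and hence three distinct real roots. -/
theorem cubic_discriminant_positive (n : ℕ) (hn : 3 ≤ n) (x : Fin n → ℝ)
    (hx : ∑ i, x i = 0) :
    0 < 4 * (((n : ℝ) - 2) / 2 * (∑ i, x i ^ 2) + n) ^ 3
        - 3 * (n.choose 3 : ℝ) * (∑ i, x i ^ 3) ^ 2 ∧
      ∃ t₁ t₂ t₃ : ℝ, t₁ ≠ t₂ ∧ t₁ ≠ t₃ ∧ t₂ ≠ t₃ ∧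
        ∀ t ∈ ({t₁, t₂, t₃} : Set ℝ),
          (n.choose 3 : ℝ) * t ^ 3 - (((n : ℝ) - 2) / 2 * (∑ i, x i ^ 2) + n) * t
            + (∑ i, x i ^ 3) / 3 = 0 := by
  have hn' : (3 : ℝ) ≤ n := by exact_mod_cast hn
  have hpower := card_mul_sq_sum_cube_le_of_sum_eq_zero (by simp; omega) hx
  rw [Fintype.card_fin] at hpower
  set S := ∑ i, x i ^ 2
  set T := ∑ i, x i ^ 3
  have hS : 0 ≤ S := sum_nonneg fun i _ ↦ sq_nonneg _
  have hB : 0 ≤ (n - 2) / 2 * S := mul_nonneg (by linarith) hS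
  have hdisc : 27 * (n.choose 3 : ℝ) * (T / 3) ^ 2 < 4 * ((n - 2) / 2 * S + n) ^ 3 :=
    calc 27 * (n.choose 3 : ℝ) * (T / 3) ^ 2
        = (n - 2) / 2 * (n * (n - 1) * T ^ 2) := by rw [Nat.cast_choose_three]; ring
      _ ≤ (n - 2) / 2 * ((n - 2) ^ 2 * S ^ 3) := by gcongr; linarith
      _ = 4 * ((n - 2) / 2 * S) ^ 3 := by ring
      _ < 4 * ((n - 2) / 2 * S + n) ^ 3 := by gcongr; linarith
  refine ⟨by linarith, ?_⟩
  obtain ⟨t₁, t₂, t₃, h₁₂, h₂₃, hroots⟩ := exists_three_roots_of_depressed_cubic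
    (Nat.cast_pos.2 (Nat.choose_pos hn)) hdisc
  exact ⟨t₁, t₂, t₃, h₁₂.ne, (h₁₂.trans h₂₃).ne, h₂₃.ne, hroots⟩
end

section
/- For every n ≥ 3, the real zero set Z(σ_{2,n} − 1, ℝ^n) = {x ∈ ℝ^n : σ_{2,n}(x) = 1} has exactly 2 connected components. -/
/-!
Since `2 σ₂(x) = s² - ‖x‖²` with `s = ∑ xᵢ`, the zero set is the two-sheeted hyperboloid
`s² = ‖x‖² + 2`, on which `s` never vanishes; its sheets are separated by the sign of `s`.
Writing `x = v + t • 𝟙` with `∑ vᵢ = 0`, a point lies on the hyperboloid iff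
`n (n - 1) t² = ‖v‖² + 2`, so for `n ≥ 2` the sheet `s > 0` is the graph of a continuous positive
function over the hyperplane `∑ vᵢ = 0`, hence connected; the sheet `s < 0` is its negative.
-/

open MvPolynomial Finset Set

theorem connectedComponentIn_eq_inter {X : Type*} [TopologicalSpace X] {Z U V : Set X}
    (hU : IsOpen U) (hV : IsOpen V) (hUV : Disjoint U V) (hZ : Z ⊆ U ∪ V)
    (hZU : IsPreconnected (Z ∩ U)) {x : X} (hx : x ∈ Z ∩ U) :
    connectedComponentIn Z x = Z ∩ U := by
  refine subset_antisymm (subset_inter (connectedComponentIn_subset Z x) ?_)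
    (hZU.subset_connectedComponentIn hx inter_subset_left)
  exact isPreconnected_connectedComponentIn.subset_left_of_subset_union hU hV hUV
    ((connectedComponentIn_subset Z x).trans hZ) ⟨x, mem_connectedComponentIn hx.1, hx.2⟩

theorem ncard_connectedComponentIn_eq_two {X : Type*} [TopologicalSpace X] {Z U V : Set X}
    (hU : IsOpen U) (hV : IsOpen V) (hUV : Disjoint U V) (hZ : Z ⊆ U ∪ V)
    (hZU : IsConnected (Z ∩ U)) (hZV : IsConnected (Z ∩ V)) :
    {K | ∃ x ∈ Z, K = connectedComponentIn Z x}.ncard = 2 := by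
  have hcompU {x} (hx : x ∈ Z ∩ U) :=
    connectedComponentIn_eq_inter hU hV hUV hZ hZU.isPreconnected hx
  have hcompV {x} (hx : x ∈ Z ∩ V) :=
    connectedComponentIn_eq_inter hV hU hUV.symm (union_comm U V ▸ hZ) hZV.isPreconnected hx
  obtain ⟨u, hu⟩ := hZU.nonempty
  obtain ⟨v, hv⟩ := hZV.nonempty
  have hcomps : {K | ∃ x ∈ Z, K = connectedComponentIn Z x} = {Z ∩ U, Z ∩ V} := by
    ext K
    constructor
    · rintro ⟨x, hx, rfl⟩
      rcases hZ hx with hxU | hxV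
      · exact Or.inl (hcompU ⟨hx, hxU⟩)
      · exact Or.inr (hcompV ⟨hx, hxV⟩)
    · rintro (rfl | rfl)
      · exact ⟨u, hu.1, (hcompU hu).symm⟩
      · exact ⟨v, hv.1, (hcompV hv).symm⟩
  rw [hcomps, ncard_pair]
  intro h
  exact disjoint_left.1 hUV hu.2 (h ▸ hu).2

section EsymmTwo

variable {ι R : Type*} [Fintype ι] [CommRing R]

theorem two_mul_esymm_two :
    (2 : MvPolynomial ι R) * esymm ι R 2 = (∑ i, X i) ^ 2 - ∑ i, X i ^ 2 := by
  have h := mul_esymm_eq_sum ι R 2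
  rw [show {a ∈ antidiagonal 2 | a.1 < 2} = {(0, 2), (1, 1)} by decide,
    sum_pair (by decide)] at h
  simp only [esymm_zero, esymm_one, psum, pow_one] at h
  linear_combination h

theorem two_mul_eval_esymm_two (x : ι → R) :
    2 * eval x (esymm ι R 2) = (∑ i, x i) ^ 2 - ∑ i, x i ^ 2 := by
  simpa using congrArg (eval x) (two_mul_esymm_two (ι := ι) (R := R))

end EsymmTwo

section Hyperboloid

variable {ι : Type*} [Fintype ι]

variable (ι) in
def sigmaTwoHyperboloid : Set (ι → ℝ) := {x | (∑ i, x i) ^ 2 = ∑ i, x i ^ 2 + 2}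

theorem setOf_eval_esymm_two_sub_one_eq_zero :
    {x : ι → ℝ | eval x (esymm ι ℝ 2 - 1) = 0} = sigmaTwoHyperboloid ι := by
  ext x
  have := two_mul_eval_esymm_two x
  simp only [mem_ofPred_eq, sigmaTwoHyperboloid, map_sub, map_one, sub_eq_zero]
  constructor <;> intro h <;> linarith

theorem sum_ne_zero_of_mem_sigmaTwoHyperboloid {x : ι → ℝ} (hx : x ∈ sigmaTwoHyperboloid ι) :
    ∑ i, x i ≠ 0 := by
  intro h
  rw [sigmaTwoHyperboloid, mem_ofPred_eq, h] at hx
  have : 0 ≤ ∑ i, x i ^ 2 := by positivity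
  linarith

theorem neg_mem_sigmaTwoHyperboloid {x : ι → ℝ} :
    -x ∈ sigmaTwoHyperboloid ι ↔ x ∈ sigmaTwoHyperboloid ι := by
  simp [sigmaTwoHyperboloid]

theorem add_const_mem_sigmaTwoHyperboloid_iff {v : ι → ℝ} (hv : ∑ i, v i = 0) (c : ℝ) :
    (fun i => v i + c) ∈ sigmaTwoHyperboloid ι ↔
      Fintype.card ι * (Fintype.card ι - 1) * c ^ 2 = ∑ i, v i ^ 2 + 2 := by
  simp only [sigmaTwoHyperboloid, mem_ofPred_eq, sum_add_distrib, add_sq, ← sum_mul, ← mul_sum, hv,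
    mul_zero, zero_mul, sum_const, card_univ, nsmul_eq_mul, zero_add, add_zero]
  constructor <;> intro h <;> linarith

noncomputable def sheetHeight (v : ι → ℝ) : ℝ :=
  √((∑ i, v i ^ 2 + 2) / (Fintype.card ι * (Fintype.card ι - 1)))

@[fun_prop]
theorem continuous_sheetHeight : Continuous (sheetHeight : (ι → ℝ) → ℝ) := by
  unfold sheetHeight
  fun_prop

theorem card_mul_card_sub_one_pos (hι : 1 < Fintype.card ι) :
    0 < (Fintype.card ι : ℝ) * (Fintype.card ι - 1) := by
  have : (1 : ℝ) < Fintype.card ι := by exact_mod_cast hι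
  nlinarith

theorem sheetHeight_pos (hι : 1 < Fintype.card ι) (v : ι → ℝ) : 0 < sheetHeight v :=
  Real.sqrt_pos.2 (div_pos (by positivity) (card_mul_card_sub_one_pos hι))

theorem sheetHeight_eq_iff (hι : 1 < Fintype.card ι) {c : ℝ} (hc : 0 ≤ c) (v : ι → ℝ) :
    sheetHeight v = c ↔ Fintype.card ι * (Fintype.card ι - 1) * c ^ 2 = ∑ i, v i ^ 2 + 2 := by
  have hd := card_mul_card_sub_one_pos hι
  rw [sheetHeight, Real.sqrt_eq_iff_eq_sq (div_nonneg (by positivity) hd.le) hc,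
    div_eq_iff hd.ne', mul_comm, eq_comm]

theorem isConnected_setOf_sum_eq_zero : IsConnected {v : ι → ℝ | ∑ i, v i = 0} :=
  ⟨⟨0, by simp⟩, (convex_hyperplane ⟨fun _ _ => sum_add_distrib, fun _ _ => (mul_sum ..).symm⟩
    0).isPreconnected⟩

theorem sigmaTwoHyperboloid_inter_pos_eq_image (hι : 1 < Fintype.card ι) :
    sigmaTwoHyperboloid ι ∩ {x | 0 < ∑ i, x i} =
      (fun v i => v i + sheetHeight v) '' {v | ∑ i, v i = 0} := by
  ext x
  constructor
  · rintro ⟨hx, hs⟩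
    have hcard : (Fintype.card ι : ℝ) ≠ 0 := by positivity
    set c := (∑ i, x i) / Fintype.card ι
    have hv : ∑ i, (x i - c) = 0 := by simp [c, sum_sub_distrib, mul_div_cancel₀ _ hcard]
    refine ⟨fun i => x i - c, hv, ?_⟩
    have hc := (add_const_mem_sigmaTwoHyperboloid_iff hv c).1 (by simpa using hx)
    dsimp only
    rw [(sheetHeight_eq_iff hι (div_pos hs (by positivity)).le _).2 hc]
    exact funext fun i => sub_add_cancel (x i) c
  · rintro ⟨v, hv : ∑ i, v i = 0, rfl⟩
    refine ⟨(add_const_mem_sigmaTwoHyperboloid_iff hv _).2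
      ((sheetHeight_eq_iff hι (sheetHeight_pos hι v).le v).1 rfl), ?_⟩
    simp only [mem_ofPred_eq, sum_add_distrib, hv, sum_const, card_univ, nsmul_eq_mul, zero_add]
    exact mul_pos (by positivity) (sheetHeight_pos hι v)

theorem isConnected_sigmaTwoHyperboloid_inter_pos (hι : 1 < Fintype.card ι) :
    IsConnected (sigmaTwoHyperboloid ι ∩ {x | 0 < ∑ i, x i}) := by
  rw [sigmaTwoHyperboloid_inter_pos_eq_image hι]
  exact isConnected_setOf_sum_eq_zero.image _ (by fun_prop : Continuous _).continuousOn

theorem isConnected_sigmaTwoHyperboloid_inter_neg (hι : 1 < Fintype.card ι) :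
    IsConnected (sigmaTwoHyperboloid ι ∩ {x | ∑ i, x i < 0}) := by
  have : sigmaTwoHyperboloid ι ∩ {x | ∑ i, x i < 0} =
      Neg.neg '' (sigmaTwoHyperboloid ι ∩ {x | 0 < ∑ i, x i}) := by
    ext x
    simp [neg_mem_sigmaTwoHyperboloid]
  rw [this]
  exact (isConnected_sigmaTwoHyperboloid_inter_pos hι).image _ continuous_neg.continuousOn

end Hyperboloid

/-- For `n ≥ 3`, the real zero set of `σ_{2,n} - 1` has exactly 2 connected components. -/
theorem sigma2_minus_one_components (n : ℕ) (hn : 3 ≤ n) :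
    letI Z : Set (Fin n → ℝ) := {x | eval x (esymm (Fin n) ℝ 2 - 1) = 0}
    {K | ∃ x ∈ Z, K = connectedComponentIn Z x}.ncard = 2 := by
  have hcard : 1 < Fintype.card (Fin n) := by rw [Fintype.card_fin]; omega
  have hsum : Continuous fun x : Fin n → ℝ => ∑ i, x i := by fun_prop
  rw [setOf_eval_esymm_two_sub_one_eq_zero]
  exact ncard_connectedComponentIn_eq_two (isOpen_lt continuous_const hsum)
    (isOpen_lt hsum continuous_const) (disjoint_left.2 fun _ hpos hneg => lt_asymm hpos.out hneg)
    (fun _ hx => (sum_ne_zero_of_mem_sigmaTwoHyperboloid hx).lt_or_gt.symm)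
    (isConnected_sigmaTwoHyperboloid_inter_pos hcard)
    (isConnected_sigmaTwoHyperboloid_inter_neg hcard)
end
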